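/- arXiv:2310.12519 — 8 statements merged into one kernel-verified Lean document; each statement's English description precedes it below -/
import Mathlib

section
/- For every n ≥ 1 and all coprime positive integers m₁ and m₂, the number of sublattices of ℤ^n of index m₁·m₂ equals the product of the number of sublattices of ℤ^n of index m₁ and the number of sublattices of ℤ^n of index m₂. -/
section Aux

variable {M : Type*} [AddCommGroup M]

/-- The submodule m•M. -/
noncomputable def smulTop (m : ℕ) (M : Type*) [AddCommGroup M] : Submodule ℤ M :=
  LinearMap.range ((m : ℤ) • (LinearMap.id : M →ₗ[ℤ] M))

lemma mem_smulTop {m : ℕ} {x : M} : x ∈ smulTop m M ↔ ∃ y, (m : ℤ) • y = x := by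
  simp [smulTop, LinearMap.mem_range]

lemma smulTop_le {m : ℕ} {Λ : Submodule ℤ M} (h : Nat.card (M ⧸ Λ) = m) (hm : 0 < m) :
    smulTop m M ≤ Λ := by
  have : Finite (M ⧸ Λ) := Nat.finite_of_card_ne_zero (by omega)
  rintro x hx
  obtain ⟨y, rfl⟩ := mem_smulTop.mp hx
  rw [← Submodule.Quotient.mk_eq_zero, Submodule.Quotient.mk_smul, ← h,
    natCast_zsmul, card_nsmul_eq_zero']

lemma bezout_decomp {m₁ m₂ : ℕ} (hcop : Nat.Coprime m₁ m₂) (x : M) :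
    ∃ a b : ℤ, a • ((m₁ : ℤ) • x) + b • ((m₂ : ℤ) • x) = x := by
  have : IsCoprime (m₁ : ℤ) (m₂ : ℤ) := by
    rw [Int.isCoprime_iff_gcd_eq_one, Int.gcd_natCast_natCast]
    exact hcop
  obtain ⟨a, b, hab⟩ := this
  exact ⟨a, b, by rw [smul_smul, smul_smul, ← add_smul, hab, one_smul]⟩

lemma sup_eq_top' {m₁ m₂ : ℕ} (hcop : Nat.Coprime m₁ m₂) {A B : Submodule ℤ M}
    (hA : smulTop m₁ M ≤ A) (hB : smulTop m₂ M ≤ B) : A ⊔ B = ⊤ := by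
  rw [eq_top_iff]
  intro x _
  obtain ⟨a, b, hab⟩ := bezout_decomp hcop x
  rw [← hab]
  refine Submodule.add_mem _ ?_ ?_
  · exact Submodule.mem_sup_left (Submodule.smul_mem _ _ (hA (mem_smulTop.mpr ⟨x, rfl⟩)))
  · exact Submodule.mem_sup_right (Submodule.smul_mem _ _ (hB (mem_smulTop.mpr ⟨x, rfl⟩)))

lemma inf_recover {m₁ m₂ : ℕ} (hcop : Nat.Coprime m₁ m₂) {Λ : Submodule ℤ M}
    (h : smulTop (m₁ * m₂) M ≤ Λ) :
    (Λ ⊔ smulTop m₁ M) ⊓ (Λ ⊔ smulTop m₂ M) = Λ := by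
  refine le_antisymm ?_ (le_inf le_sup_left le_sup_left)
  rintro x ⟨hx₁, hx₂⟩
  obtain ⟨a, b, hab⟩ := bezout_decomp hcop x
  have key : ∀ (c d : ℕ) (y : M), y ∈ Λ ⊔ smulTop d M → (c : ℤ) • y ∈ Λ ⊔ smulTop (c * d) M := by
    intro c d y hy
    obtain ⟨u, hu, v, hv, rfl⟩ := Submodule.mem_sup.mp hy
    obtain ⟨w, rfl⟩ := mem_smulTop.mp hv
    rw [smul_add]
    refine Submodule.add_mem _ (Submodule.mem_sup_left (Submodule.smul_mem _ _ hu)) ?_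
    exact Submodule.mem_sup_right (mem_smulTop.mpr ⟨w, by push_cast; rw [smul_smul]⟩)
  have h1 : (m₁ : ℤ) • x ∈ Λ := by
    have := key m₁ m₂ x hx₂
    rwa [sup_eq_left.mpr h] at this
  have h2 : (m₂ : ℤ) • x ∈ Λ := by
    have := key m₂ m₁ x hx₁
    rwa [Nat.mul_comm, sup_eq_left.mpr h] at this
  rw [← hab]
  exact Submodule.add_mem _ (Submodule.smul_mem _ _ h1) (Submodule.smul_mem _ _ h2)

lemma sup_recover {m₁ m₂ : ℕ} (hcop : Nat.Coprime m₁ m₂) {Λ₁ Λ₂ : Submodule ℤ M}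
    (h₁ : smulTop m₁ M ≤ Λ₁) (h₂ : smulTop m₂ M ≤ Λ₂) :
    (Λ₁ ⊓ Λ₂) ⊔ smulTop m₁ M = Λ₁ := by
  refine le_antisymm (sup_le inf_le_left h₁) ?_
  intro x hx
  obtain ⟨a, b, hab⟩ := bezout_decomp hcop x
  rw [← hab]
  refine Submodule.add_mem _ ?_ ?_
  · exact Submodule.mem_sup_right (Submodule.smul_mem _ _ (mem_smulTop.mpr ⟨x, rfl⟩))
  · refine Submodule.mem_sup_left (Submodule.smul_mem _ _ (Submodule.mem_inf.mpr ⟨Submodule.smul_mem _ _ hx, h₂ (mem_smulTop.mpr ⟨x, rfl⟩)⟩))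

lemma card_inf {A B : Submodule ℤ M} (h : A ⊔ B = ⊤) :
    Nat.card (M ⧸ (A ⊓ B)) = Nat.card (M ⧸ A) * Nat.card (M ⧸ B) := by
  have hker : LinearMap.ker (A.mkQ.prod B.mkQ) = A ⊓ B := by
    rw [LinearMap.ker_prod, Submodule.ker_mkQ, Submodule.ker_mkQ]
  have hsurj : Function.Surjective (A.mkQ.prod B.mkQ) := by
    rintro ⟨x, y⟩
    obtain ⟨x, rfl⟩ := A.mkQ_surjective x
    obtain ⟨y, rfl⟩ := B.mkQ_surjective y
    have hxy : y - x ∈ A ⊔ B := h ▸ Submodule.mem_top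
    obtain ⟨c, hc, d, hd, hcd⟩ := Submodule.mem_sup.mp hxy
    refine ⟨x + c, Prod.ext ?_ ?_⟩
    · show Submodule.Quotient.mk (x + c) = Submodule.Quotient.mk x
      rw [Submodule.Quotient.eq]
      simpa using hc
    · show Submodule.Quotient.mk (x + c) = Submodule.Quotient.mk y
      rw [Submodule.Quotient.eq]
      have : x + c - y = -d := by linear_combination (norm := abel) hcd
      rw [this]
      exact neg_mem hd
  have e := LinearMap.quotKerEquivOfSurjective (A.mkQ.prod B.mkQ) hsurj
  rw [hker] at e
  rw [Nat.card_congr e.toEquiv, Nat.card_prod]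

lemma card_quot_dvd {Λ Λ' : Submodule ℤ M} (h : Λ ≤ Λ') :
    Nat.card (M ⧸ Λ') ∣ Nat.card (M ⧸ Λ) := by
  have hsurj : Function.Surjective (Submodule.mapQ Λ Λ' LinearMap.id h) := by
    intro x
    obtain ⟨x, rfl⟩ := Λ'.mkQ_surjective x
    exact ⟨Submodule.Quotient.mk x, rfl⟩
  exact AddSubgroup.card_dvd_of_surjective (Submodule.mapQ Λ Λ' LinearMap.id h).toAddMonoidHom hsurj

end Aux

section Aux2

variable {M : Type*} [AddCommGroup M]

lemma card_sup_smulTop_dvd {m₁ m₂ : ℕ} (hm₁ : 0 < m₁) (hm₂ : 0 < m₂)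
    (hcop : Nat.Coprime m₁ m₂) {Λ : Submodule ℤ M} (h : Nat.card (M ⧸ Λ) = m₁ * m₂) :
    Nat.card (M ⧸ (Λ ⊔ smulTop m₁ M)) ∣ m₁ := by
  set Λ₁ := Λ ⊔ smulTop m₁ M with hΛ₁
  have hfin : Finite (M ⧸ Λ) := Nat.finite_of_card_ne_zero
    (by rw [h]; exact Nat.mul_ne_zero hm₁.ne' hm₂.ne')
  have hdvd : Nat.card (M ⧸ Λ₁) ∣ m₁ * m₂ := h ▸ card_quot_dvd le_sup_left
  have hfin₁ : Finite (M ⧸ Λ₁) := by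
    refine Finite.of_surjective (Submodule.mapQ Λ Λ₁ LinearMap.id le_sup_left) ?_
    intro x
    obtain ⟨x, rfl⟩ := Λ₁.mkQ_surjective x
    exact ⟨Submodule.Quotient.mk x, rfl⟩
  -- every element of the quotient is killed by m₁
  have hkill : ∀ x : M ⧸ Λ₁, m₁ • x = 0 := by
    intro x
    obtain ⟨y, rfl⟩ := Λ₁.mkQ_surjective x
    have : (m₁ : ℤ) • y ∈ Λ₁ := Submodule.mem_sup_right (mem_smulTop.mpr ⟨y, rfl⟩)
    calc m₁ • Λ₁.mkQ y = Λ₁.mkQ ((m₁ : ℤ) • y) := by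
          rw [map_smul, natCast_zsmul]
      _ = 0 := (Submodule.Quotient.mk_eq_zero Λ₁).mpr this
  have hprime : ∀ p : ℕ, p.Prime → p ∣ Nat.card (M ⧸ Λ₁) → p ∣ m₁ := by
    intro p hp hpc
    haveI : Fact p.Prime := ⟨hp⟩
    obtain ⟨x, hx⟩ := exists_prime_addOrderOf_dvd_card' (G := M ⧸ Λ₁) p hpc
    exact hx ▸ addOrderOf_dvd_of_nsmul_eq_zero (hkill x)
  have hcop' : Nat.Coprime (Nat.card (M ⧸ Λ₁)) m₂ := by
    by_contra hne
    obtain ⟨p, hp, hpdvd⟩ := Nat.exists_prime_and_dvd hne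
    have hp1 : p ∣ Nat.card (M ⧸ Λ₁) := hpdvd.trans (Nat.gcd_dvd_left _ _)
    have hp2 : p ∣ m₂ := hpdvd.trans (Nat.gcd_dvd_right _ _)
    have hpm₁ : p ∣ m₁ := hprime p hp hp1
    exact hp.ne_one (Nat.dvd_one.mp (hcop ▸ Nat.dvd_gcd hpm₁ hp2))
  exact (Nat.Coprime.dvd_of_dvd_mul_right hcop' hdvd)

end Aux2

section Aux3

variable {M : Type*} [AddCommGroup M]

lemma card_sup_smulTop_eq {m₁ m₂ : ℕ} (hm₁ : 0 < m₁) (hm₂ : 0 < m₂)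
    (hcop : Nat.Coprime m₁ m₂) {Λ : Submodule ℤ M} (h : Nat.card (M ⧸ Λ) = m₁ * m₂) :
    Nat.card (M ⧸ (Λ ⊔ smulTop m₁ M)) = m₁ ∧ Nat.card (M ⧸ (Λ ⊔ smulTop m₂ M)) = m₂ := by
  have h' : Nat.card (M ⧸ Λ) = m₂ * m₁ := by rw [h, Nat.mul_comm]
  have hd₁ := card_sup_smulTop_dvd hm₁ hm₂ hcop h
  have hd₂ := card_sup_smulTop_dvd hm₂ hm₁ hcop.symm h'
  set c₁ := Nat.card (M ⧸ (Λ ⊔ smulTop m₁ M))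
  set c₂ := Nat.card (M ⧸ (Λ ⊔ smulTop m₂ M))
  have htop : (Λ ⊔ smulTop m₁ M) ⊔ (Λ ⊔ smulTop m₂ M) = ⊤ :=
    sup_eq_top' hcop le_sup_right le_sup_right
  have hrec : (Λ ⊔ smulTop m₁ M) ⊓ (Λ ⊔ smulTop m₂ M) = Λ :=
    inf_recover hcop (smulTop_le h (Nat.mul_pos hm₁ hm₂))
  have hprod : m₁ * m₂ = c₁ * c₂ := by
    rw [← h, ← hrec, card_inf htop]
  have hm₁c : m₁ ∣ c₁ := by
    have hcop₂ : Nat.Coprime m₁ c₂ := Nat.Coprime.coprime_dvd_right hd₂ hcop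
    exact hcop₂.dvd_of_dvd_mul_right ⟨m₂, by rw [← hprod]⟩
  have hm₂c : m₂ ∣ c₂ := by
    have hcop₁ : Nat.Coprime m₂ c₁ := Nat.Coprime.coprime_dvd_right hd₁ hcop.symm
    exact hcop₁.dvd_of_dvd_mul_right ⟨m₁, by rw [Nat.mul_comm, ← hprod, Nat.mul_comm]⟩
  exact ⟨Nat.dvd_antisymm hd₁ hm₁c, Nat.dvd_antisymm hd₂ hm₂c⟩

lemma card_inf_eq {m₁ m₂ : ℕ} (hm₁ : 0 < m₁) (hm₂ : 0 < m₂)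
    (hcop : Nat.Coprime m₁ m₂) {Λ₁ Λ₂ : Submodule ℤ M}
    (h₁ : Nat.card (M ⧸ Λ₁) = m₁) (h₂ : Nat.card (M ⧸ Λ₂) = m₂) :
    Nat.card (M ⧸ (Λ₁ ⊓ Λ₂)) = m₁ * m₂ := by
  rw [card_inf (sup_eq_top' hcop (smulTop_le h₁ hm₁) (smulTop_le h₂ hm₂)), h₁, h₂]

end Aux3

/-- The number of sublattices of ℤ^n of index m, i.e. ℤ-submodules Λ of ℤ^n with
ℤ^n/Λ finite of cardinality m. -/
noncomputable def numSublattices (n m : ℕ) : ℕ :=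
  Nat.card {Λ : Submodule ℤ (Fin n → ℤ) // Nat.card ((Fin n → ℤ) ⧸ Λ) = m}

/-- For every n ≥ 1 and all coprime positive integers m₁ and m₂, the number of
sublattices of ℤ^n of index m₁·m₂ equals the product of the number of sublattices of index m₁
and the number of sublattices of index m₂. -/
theorem stmt1 (n : ℕ) (hn : 1 ≤ n) (m₁ m₂ : ℕ) (hm₁ : 0 < m₁) (hm₂ : 0 < m₂)
    (hcop : Nat.Coprime m₁ m₂) :
    numSublattices n (m₁ * m₂) = numSublattices n m₁ * numSublattices n m₂ := by
  set M := Fin n → ℤ with hM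
  let e : {Λ : Submodule ℤ M // Nat.card (M ⧸ Λ) = m₁ * m₂} ≃
      {Λ : Submodule ℤ M // Nat.card (M ⧸ Λ) = m₁} × {Λ : Submodule ℤ M // Nat.card (M ⧸ Λ) = m₂} :=
    { toFun := fun Λ =>
        (⟨Λ.1 ⊔ smulTop m₁ M, (card_sup_smulTop_eq hm₁ hm₂ hcop Λ.2).1⟩,
         ⟨Λ.1 ⊔ smulTop m₂ M, (card_sup_smulTop_eq hm₁ hm₂ hcop Λ.2).2⟩)
      invFun := fun p =>
        ⟨p.1.1 ⊓ p.2.1, card_inf_eq hm₁ hm₂ hcop p.1.2 p.2.2⟩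
      left_inv := fun Λ => by
        ext1
        exact inf_recover hcop (smulTop_le Λ.2 (Nat.mul_pos hm₁ hm₂))
      right_inv := fun p => by
        refine Prod.ext ?_ ?_
        · ext1
          exact sup_recover hcop (smulTop_le p.1.2 hm₁) (smulTop_le p.2.2 hm₂)
        · ext1
          show (p.1.1 ⊓ p.2.1) ⊔ smulTop m₂ M = p.2.1
          rw [inf_comm]
          exact sup_recover hcop.symm (smulTop_le p.2.2 hm₂) (smulTop_le p.1.2 hm₁) }
  rw [numSublattices, numSublattices, numSublattices, Nat.card_congr e, Nat.card_prod]
end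

section
/- For every n ≥ 1 and all coprime positive integers m₁ and m₂, the set HNF_n(m₁·m₂) is in bijection with the product HNF_n(m₁) × HNF_n(m₂); in particular its cardinality is the product of the cardinalities of HNF_n(m₁) and HNF_n(m₂). -/
/-- HNF_n(m): the set of n×n upper-triangular integer matrices with positive diagonal entries,
with 0 ≤ H i j < H j j for i < j, and determinant m. -/
def HNFset (n : ℕ) (m : ℤ) : Set (Matrix (Fin n) (Fin n) ℤ) :=
  {H | (∀ i j : Fin n, j < i → H i j = 0) ∧ (∀ i : Fin n, 0 < H i i) ∧
    (∀ i j : Fin n, i < j → 0 ≤ H i j ∧ H i j < H j j) ∧ H.det = m}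

namespace HNFaux

/-- The "A-part" (mod gcd with m₁) of an HNF matrix. -/
def matA (n : ℕ) (m₁ : ℕ) (H : Matrix (Fin n) (Fin n) ℤ) : Matrix (Fin n) (Fin n) ℤ :=
  fun i j => if i = j then (Nat.gcd (H j j).natAbs m₁ : ℤ)
    else if i < j then H i j % (Nat.gcd (H j j).natAbs m₁ : ℤ) else 0

/-- The "B-part" (div gcd with m₁) of an HNF matrix. -/
def matB (n : ℕ) (m₁ : ℕ) (H : Matrix (Fin n) (Fin n) ℤ) : Matrix (Fin n) (Fin n) ℤ :=
  fun i j => if i = j then H j j / (Nat.gcd (H j j).natAbs m₁ : ℤ)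
    else if i < j then H i j / (Nat.gcd (H j j).natAbs m₁ : ℤ) else 0

/-- Combine two HNF matrices. -/
def matMul (n : ℕ) (A B : Matrix (Fin n) (Fin n) ℤ) : Matrix (Fin n) (Fin n) ℤ :=
  fun i j => if i = j then A j j * B j j
    else if i < j then A i j + A j j * B i j else 0

section entries

variable {n m₁ : ℕ} {H A B : Matrix (Fin n) (Fin n) ℤ} {i j : Fin n}

theorem matA_diag : matA n m₁ H j j = (Nat.gcd (H j j).natAbs m₁ : ℤ) := by simp [matA]

theorem matA_off (h : i < j) :
    matA n m₁ H i j = H i j % (Nat.gcd (H j j).natAbs m₁ : ℤ) := by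
  simp [matA, h, h.ne]

theorem matA_low (h : j < i) : matA n m₁ H i j = 0 := by
  simp [matA, h.ne', not_lt.mpr h.le]

theorem matB_diag : matB n m₁ H j j = H j j / (Nat.gcd (H j j).natAbs m₁ : ℤ) := by simp [matB]

theorem matB_off (h : i < j) :
    matB n m₁ H i j = H i j / (Nat.gcd (H j j).natAbs m₁ : ℤ) := by
  simp [matB, h, h.ne]

theorem matB_low (h : j < i) : matB n m₁ H i j = 0 := by
  simp [matB, h.ne', not_lt.mpr h.le]

theorem matMul_diag : matMul n A B j j = A j j * B j j := by simp [matMul]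

theorem matMul_off (h : i < j) : matMul n A B i j = A i j + A j j * B i j := by
  simp [matMul, h, h.ne]

theorem matMul_low (h : j < i) : matMul n A B i j = 0 := by
  simp [matMul, h.ne', not_lt.mpr h.le]

end entries

theorem prod_diag_eq {n : ℕ} {m : ℤ} {H : Matrix (Fin n) (Fin n) ℤ}
    (hH : H ∈ HNFset n m) : ∏ j, H j j = m := by
  obtain ⟨hlow, -, -, hdet⟩ := hH
  rw [← hdet]
  exact (Matrix.det_of_upperTriangular (fun i j h => hlow i j h)).symm

theorem prod_natAbs_diag_eq {n : ℕ} {m : ℕ} {H : Matrix (Fin n) (Fin n) ℤ}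
    (hH : H ∈ HNFset n (m : ℤ)) : ∏ j, (H j j).natAbs = m := by
  have h1 : ∏ j, H j j = (m : ℤ) := prod_diag_eq hH
  have h2 : ∀ j : Fin n, ((H j j).natAbs : ℤ) = H j j :=
    fun j => Int.natAbs_of_nonneg (le_of_lt (hH.2.1 j))
  have h3 : ((∏ j, (H j j).natAbs : ℕ) : ℤ) = (m : ℤ) := by
    rw [Nat.cast_prod, Finset.prod_congr rfl (fun j _ => h2 j)]
    exact h1
  exact_mod_cast h3

theorem prodKey {n m₁ m₂ : ℕ} (hm₁ : 0 < m₁) (hm₂ : 0 < m₂)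
    (hcop : Nat.Coprime m₁ m₂) (d : Fin n → ℕ)
    (hprod : ∏ j, d j = m₁ * m₂) :
    (∏ j, Nat.gcd (d j) m₁) = m₁ ∧ (∏ j, Nat.gcd (d j) m₂) = m₂ := by
  have hdvd : ∀ j, d j ∣ m₁ * m₂ := fun j =>
    hprod ▸ Finset.dvd_prod_of_mem d (Finset.mem_univ j)
  have hsplit : ∀ j, Nat.gcd (d j) m₁ * Nat.gcd (d j) m₂ = d j := fun j =>
    (Nat.gcd_mul_gcd_eq_iff_dvd_mul_of_coprime hcop).mpr (hdvd j)
  have hAB : (∏ j, Nat.gcd (d j) m₁) * (∏ j, Nat.gcd (d j) m₂) = m₁ * m₂ := by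
    rw [← Finset.prod_mul_distrib]
    rw [Finset.prod_congr rfl (fun j _ => hsplit j)]
    exact hprod
  have hA1 : (∏ j, Nat.gcd (d j) m₁) ∣ m₁ := by
    have hcopA : Nat.Coprime (∏ j, Nat.gcd (d j) m₁) m₂ :=
      Nat.Coprime.prod_left fun j _ =>
        Nat.Coprime.coprime_dvd_left (Nat.gcd_dvd_right _ _) hcop
    exact hcopA.dvd_of_dvd_mul_right ⟨_, hAB.symm⟩
  have hB1 : (∏ j, Nat.gcd (d j) m₂) ∣ m₂ := by
    have hcopB : Nat.Coprime (∏ j, Nat.gcd (d j) m₂) m₁ :=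
      Nat.Coprime.prod_left fun j _ =>
        Nat.Coprime.coprime_dvd_left (Nat.gcd_dvd_right _ _) hcop.symm
    exact hcopB.dvd_of_dvd_mul_right
      ⟨(∏ j, Nat.gcd (d j) m₁), by rw [Nat.mul_comm m₂ m₁, ← hAB, Nat.mul_comm]⟩
  have hAle := Nat.le_of_dvd hm₁ hA1
  have hBle := Nat.le_of_dvd hm₂ hB1
  have hAeq : (∏ j, Nat.gcd (d j) m₁) = m₁ := by
    refine le_antisymm hAle ?_
    have h1 : m₁ * m₂ ≤ (∏ j, Nat.gcd (d j) m₁) * m₂ := by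
      rw [← hAB]; exact Nat.mul_le_mul le_rfl hBle
    exact Nat.le_of_mul_le_mul_right h1 hm₂
  refine ⟨hAeq, ?_⟩
  have h2 : m₁ * (∏ j, Nat.gcd (d j) m₂) = m₁ * m₂ := by
    conv_lhs => rw [← hAeq]
    exact hAB
  exact Nat.eq_of_mul_eq_mul_left hm₁ h2

theorem gcd_mul_eq {α β m₁ m₂ : ℕ} (hα : α ∣ m₁) (hβ : β ∣ m₂)
    (hcop : Nat.Coprime m₁ m₂) : Nat.gcd (α * β) m₁ = α := by
  refine Nat.dvd_antisymm ?_ (Nat.dvd_gcd (Dvd.intro β rfl) hα)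
  have hco : Nat.Coprime (Nat.gcd (α * β) m₁) β :=
    Nat.Coprime.coprime_dvd_left (Nat.gcd_dvd_right _ _) (hcop.coprime_dvd_right hβ)
  exact hco.dvd_of_dvd_mul_right (Nat.gcd_dvd_left _ _)

section Main

variable {n m₁ m₂ : ℕ}

theorem memA (hm₁ : 0 < m₁) (hm₂ : 0 < m₂) (hcop : Nat.Coprime m₁ m₂)
    {H : Matrix (Fin n) (Fin n) ℤ} (hH : H ∈ HNFset n ((m₁ : ℤ) * (m₂ : ℤ))) :
    matA n m₁ H ∈ HNFset n (m₁ : ℤ) := by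
  obtain ⟨hlow, hdiag, hoff, hdet⟩ := hH
  have hHmem : H ∈ HNFset n ((m₁ * m₂ : ℕ) : ℤ) := by
    refine ⟨hlow, hdiag, hoff, ?_⟩; rw [hdet]; push_cast; ring
  have hprodd : ∏ j, (H j j).natAbs = m₁ * m₂ := prod_natAbs_diag_eq hHmem
  have hkey := prodKey hm₁ hm₂ hcop _ hprodd
  have hgpos : ∀ j : Fin n, (0 : ℤ) < (Nat.gcd (H j j).natAbs m₁ : ℤ) := fun j => by
    exact_mod_cast Nat.gcd_pos_of_pos_right _ hm₁
  refine ⟨fun i j h => matA_low h, fun i => by rw [matA_diag]; exact hgpos i, ?_, ?_⟩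
  · intro i j h
    rw [matA_off h, matA_diag]
    exact ⟨Int.emod_nonneg _ (ne_of_gt (hgpos j)), Int.emod_lt_of_pos _ (hgpos j)⟩
  · rw [Matrix.det_of_upperTriangular (M := matA n m₁ H) (fun i j h => matA_low h)]
    rw [Finset.prod_congr rfl (fun (j : Fin n) _ => matA_diag (H := H)), ← Nat.cast_prod,
      hkey.1]

theorem memB (hm₁ : 0 < m₁) (hm₂ : 0 < m₂) (hcop : Nat.Coprime m₁ m₂)
    {H : Matrix (Fin n) (Fin n) ℤ} (hH : H ∈ HNFset n ((m₁ : ℤ) * (m₂ : ℤ))) :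
    matB n m₁ H ∈ HNFset n (m₂ : ℤ) := by
  obtain ⟨hlow, hdiag, hoff, hdet⟩ := hH
  have hHmem : H ∈ HNFset n ((m₁ * m₂ : ℕ) : ℤ) := by
    refine ⟨hlow, hdiag, hoff, ?_⟩; rw [hdet]; push_cast; ring
  have hprodd : ∏ j, (H j j).natAbs = m₁ * m₂ := prod_natAbs_diag_eq hHmem
  have hkey := prodKey hm₁ hm₂ hcop _ hprodd
  have hgpos : ∀ j : Fin n, (0 : ℤ) < (Nat.gcd (H j j).natAbs m₁ : ℤ) := fun j => by
    exact_mod_cast Nat.gcd_pos_of_pos_right _ hm₁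
  have hgdvd : ∀ j : Fin n, (Nat.gcd (H j j).natAbs m₁ : ℤ) ∣ H j j := fun j => by
    rw [← Int.natAbs_of_nonneg (le_of_lt (hdiag j))]
    exact_mod_cast Nat.gcd_dvd_left _ _
  have hcancel : ∀ j : Fin n,
      (Nat.gcd (H j j).natAbs m₁ : ℤ) * (H j j / (Nat.gcd (H j j).natAbs m₁ : ℤ)) = H j j :=
    fun j => Int.mul_ediv_cancel' (hgdvd j)
  have hBpos : ∀ j : Fin n, 0 < H j j / (Nat.gcd (H j j).natAbs m₁ : ℤ) := fun j => by
    by_contra hc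
    push_neg at hc
    have h0 := mul_nonpos_of_nonneg_of_nonpos (le_of_lt (hgpos j)) hc
    rw [hcancel j] at h0
    exact absurd (hdiag j) (not_lt_of_ge h0)
  refine ⟨fun i j h => matB_low h, fun i => by rw [matB_diag]; exact hBpos i, ?_, ?_⟩
  · intro i j h
    rw [matB_off h, matB_diag]
    refine ⟨Int.ediv_nonneg (hoff i j h).1 (le_of_lt (hgpos j)), ?_⟩
    rw [Int.ediv_lt_iff_lt_mul (hgpos j)]
    calc H i j < H j j := (hoff i j h).2
      _ = _ := (Int.ediv_mul_cancel (hgdvd j)).symm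
  · rw [Matrix.det_of_upperTriangular (M := matB n m₁ H) (fun i j h => matB_low h)]
    have hmul : ((m₁ : ℤ)) * (∏ j, matB n m₁ H j j) = (m₁ : ℤ) * (m₂ : ℤ) := by
      have h1 : (∏ j, (Nat.gcd (H j j).natAbs m₁ : ℤ)) *
          (∏ j, matB n m₁ H j j) = ∏ j, H j j := by
        rw [← Finset.prod_mul_distrib]
        refine Finset.prod_congr rfl (fun j _ => ?_)
        rw [matB_diag]; exact hcancel j
      have h2 : (∏ j, (Nat.gcd (H j j).natAbs m₁ : ℤ)) = (m₁ : ℤ) := by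
        rw [← Nat.cast_prod, hkey.1]
      have h3 : ∏ j, H j j = (m₁ : ℤ) * (m₂ : ℤ) :=
        prod_diag_eq ⟨hlow, hdiag, hoff, hdet⟩
      rw [← h2, h1, h3, h2]
    have hm₁z : (m₁ : ℤ) ≠ 0 := by exact_mod_cast hm₁.ne'
    exact mul_left_cancel₀ hm₁z hmul

theorem memMul {A B : Matrix (Fin n) (Fin n) ℤ}
    (hA : A ∈ HNFset n (m₁ : ℤ)) (hB : B ∈ HNFset n (m₂ : ℤ)) :
    matMul n A B ∈ HNFset n ((m₁ : ℤ) * (m₂ : ℤ)) := by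
  obtain ⟨hAlow, hAdiag, hAoff, hAdet⟩ := hA
  obtain ⟨hBlow, hBdiag, hBoff, hBdet⟩ := hB
  refine ⟨fun i j h => matMul_low h,
    fun i => by rw [matMul_diag]; exact mul_pos (hAdiag i) (hBdiag i), ?_, ?_⟩
  · intro i j h
    rw [matMul_off h, matMul_diag]
    have h1 := hAoff i j h
    have h2 := hBoff i j h
    have h3 := hAdiag j
    have h4 := hBdiag j
    constructor
    · have : 0 ≤ A j j * B i j := mul_nonneg (le_of_lt h3) h2.1
      linarith [h1.1]
    · have h5 : B i j + 1 ≤ B j j := Int.lt_iff_add_one_le.mp h2.2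
      nlinarith [h1.2]
  · rw [Matrix.det_of_upperTriangular (M := matMul n A B) (fun i j h => matMul_low h)]
    rw [Finset.prod_congr rfl (fun (j : Fin n) _ => matMul_diag (A := A) (B := B)),
      Finset.prod_mul_distrib,
      prod_diag_eq ⟨hAlow, hAdiag, hAoff, hAdet⟩,
      prod_diag_eq ⟨hBlow, hBdiag, hBoff, hBdet⟩]

theorem left_inv_eq (hm₁ : 0 < m₁)
    {H : Matrix (Fin n) (Fin n) ℤ} (hH : H ∈ HNFset n ((m₁ : ℤ) * (m₂ : ℤ))) :
    matMul n (matA n m₁ H) (matB n m₁ H) = H := by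
  obtain ⟨hlow, hdiag, hoff, hdet⟩ := hH
  have hgdvd : ∀ j : Fin n, (Nat.gcd (H j j).natAbs m₁ : ℤ) ∣ H j j := fun j => by
    rw [← Int.natAbs_of_nonneg (le_of_lt (hdiag j))]
    exact_mod_cast Nat.gcd_dvd_left _ _
  ext i j
  rcases lt_trichotomy i j with h | h | h
  · rw [matMul_off h, matA_off h, matB_off h, matA_diag]
    exact Int.emod_add_mul_ediv _ _
  · subst h
    rw [matMul_diag, matA_diag, matB_diag]
    exact Int.mul_ediv_cancel' (hgdvd i)
  · rw [matMul_low h]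
    exact (hlow i j h).symm

theorem right_inv_eq (hm₁ : 0 < m₁) (hm₂ : 0 < m₂) (hcop : Nat.Coprime m₁ m₂)
    {A B : Matrix (Fin n) (Fin n) ℤ}
    (hA : A ∈ HNFset n (m₁ : ℤ)) (hB : B ∈ HNFset n (m₂ : ℤ)) :
    matA n m₁ (matMul n A B) = A ∧ matB n m₁ (matMul n A B) = B := by
  obtain ⟨hAlow, hAdiag, hAoff, hAdet⟩ := hA
  obtain ⟨hBlow, hBdiag, hBoff, hBdet⟩ := hB
  have hαdvd : ∀ j : Fin n, (A j j).natAbs ∣ m₁ := fun j => by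
    rw [← prod_natAbs_diag_eq (m := m₁) ⟨hAlow, hAdiag, hAoff, hAdet⟩]
    exact Finset.dvd_prod_of_mem _ (Finset.mem_univ j)
  have hβdvd : ∀ j : Fin n, (B j j).natAbs ∣ m₂ := fun j => by
    rw [← prod_natAbs_diag_eq (m := m₂) ⟨hBlow, hBdiag, hBoff, hBdet⟩]
    exact Finset.dvd_prod_of_mem _ (Finset.mem_univ j)
  have hgcd : ∀ j : Fin n, (Nat.gcd ((matMul n A B) j j).natAbs m₁ : ℤ) = A j j := fun j => by
    rw [matMul_diag, Int.natAbs_mul, gcd_mul_eq (hαdvd j) (hβdvd j) hcop]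
    exact Int.natAbs_of_nonneg (le_of_lt (hAdiag j))
  have hApos : ∀ j : Fin n, A j j ≠ 0 := fun j => ne_of_gt (hAdiag j)
  constructor
  · ext i j
    rcases lt_trichotomy i j with h | h | h
    · rw [matA_off h, hgcd j, matMul_off h, Int.add_mul_emod_self_left,
        Int.emod_eq_of_lt (hAoff i j h).1 (hAoff i j h).2]
    · subst h
      rw [matA_diag, hgcd i]
    · rw [matA_low h]
      exact (hAlow i j h).symm
  · ext i j
    rcases lt_trichotomy i j with h | h | h
    · rw [matB_off h, hgcd j, matMul_off h, Int.add_mul_ediv_left _ _ (hApos j),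
        Int.ediv_eq_zero_of_lt (hAoff i j h).1 (hAoff i j h).2, zero_add]
    · subst h
      rw [matB_diag, hgcd i, matMul_diag, Int.mul_ediv_cancel_left _ (hApos i)]
    · rw [matB_low h]
      exact (hBlow i j h).symm

end Main

end HNFaux

/-- For every n ≥ 1 and all coprime positive integers m₁ and m₂, the set
HNF_n(m₁·m₂) is in bijection with HNF_n(m₁) × HNF_n(m₂); in particular its cardinality is
the product of the cardinalities. -/
theorem stmt2 (n : ℕ) (hn : 1 ≤ n) (m₁ m₂ : ℕ) (hm₁ : 0 < m₁) (hm₂ : 0 < m₂)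
    (hcop : Nat.Coprime m₁ m₂) :
    Nonempty ((HNFset n ((m₁ : ℤ) * (m₂ : ℤ))) ≃ (HNFset n (m₁ : ℤ)) × (HNFset n (m₂ : ℤ))) ∧
    Nat.card (HNFset n ((m₁ : ℤ) * (m₂ : ℤ))) =
      Nat.card (HNFset n (m₁ : ℤ)) * Nat.card (HNFset n (m₂ : ℤ)) := by
  have e : (HNFset n ((m₁ : ℤ) * (m₂ : ℤ))) ≃ (HNFset n (m₁ : ℤ)) × (HNFset n (m₂ : ℤ)) :=
    { toFun := fun H => (⟨HNFaux.matA n m₁ H.1, HNFaux.memA hm₁ hm₂ hcop H.2⟩,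
        ⟨HNFaux.matB n m₁ H.1, HNFaux.memB hm₁ hm₂ hcop H.2⟩)
      invFun := fun AB => ⟨HNFaux.matMul n AB.1.1 AB.2.1, HNFaux.memMul AB.1.2 AB.2.2⟩
      left_inv := fun H => Subtype.ext (HNFaux.left_inv_eq hm₁ H.2)
      right_inv := fun AB => by
        obtain ⟨hA, hB⟩ := HNFaux.right_inv_eq hm₁ hm₂ hcop AB.1.2 AB.2.2
        exact Prod.ext (Subtype.ext hA) (Subtype.ext hB) }
  exact ⟨⟨e⟩, by rw [Nat.card_congr e, Nat.card_prod]⟩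
end

section
/- For every n ≥ 1 and every positive integer m, the map sending a matrix H ∈ HNF_n(m) to the ℤ-submodule of ℤ^n spanned by the rows of H is a bijection from HNF_n(m) onto the set of sublattices of ℤ^n of index m. -/
section HNFAux
variable {n : ℕ} (r : Fin n → Fin n → ℤ)
variable (hr1 : ∀ j k : Fin n, k < j → r j k = 0) (hr2 : ∀ j, 0 < r j j)

include hr1 hr2 in
lemma hnf_tri_coeff (c : Fin n → ℤ) (i : Fin n)
    (hv : ∀ j : Fin n, j < i → (∑ l, c l • r l) j = 0) :
    ∀ j : Fin n, j < i → c j = 0 := by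
  have key : ∀ N : ℕ, ∀ j : Fin n, (j : ℕ) < N → j < i → c j = 0 := by
    intro N
    induction N with
    | zero => intro j hj; omega
    | succ N ih =>
      intro j hjN hji
      have h0 : (∑ l, c l • r l) j = 0 := hv j hji
      have hs : (∑ l, c l • r l) j = ∑ l, c l * r l j := by simp [Finset.sum_apply]
      rw [hs, Finset.sum_eq_single j] at h0
      · have := hr2 j
        exact by nlinarith [mul_eq_zero.mp h0]
      · intro b _ hb
        rcases lt_or_gt_of_ne hb with hlt | hgt
        · have : (b : ℕ) < N := by
            have := Fin.lt_iff_val_lt_val.mp hlt; omega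
          rw [ih b this (lt_trans hlt hji)]; ring
        · rw [hr1 b j hgt]; ring
      · intro h; exact absurd (Finset.mem_univ j) h
  exact fun j hj => key n j j.isLt hj

include hr1 hr2 in
lemma hnf_span_vanish_dvd {v : Fin n → ℤ} (hv : v ∈ Submodule.span ℤ (Set.range r))
    (i : Fin n) (h0 : ∀ j : Fin n, j < i → v j = 0) : r i i ∣ v i := by
  obtain ⟨c, hc⟩ := (Submodule.mem_span_range_iff_exists_fun ℤ).mp hv
  have hcz : ∀ j : Fin n, j < i → c j = 0 :=
    hnf_tri_coeff r hr1 hr2 c i (fun j hj => by rw [hc]; exact h0 j hj)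
  have hvi : v i = ∑ l, c l * r l i := by rw [← hc]; simp [Finset.sum_apply]
  rw [hvi, Finset.sum_eq_single i]
  · exact ⟨c i, mul_comm _ _⟩
  · intro b _ hb
    rcases lt_or_gt_of_ne hb with hlt | hgt
    · rw [hcz b hlt]; ring
    · rw [hr1 b i hgt]; ring
  · intro h; exact absurd (Finset.mem_univ i) h

include hr1 hr2 in
lemma hnf_box_zero {v : Fin n → ℤ} (hv : v ∈ Submodule.span ℤ (Set.range r))
    (hb : ∀ j : Fin n, |v j| < r j j) : v = 0 := by
  have key : ∀ N : ℕ, ∀ i : Fin n, (i : ℕ) < N → v i = 0 := by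
    intro N
    induction N with
    | zero => intro i hi; omega
    | succ N ih =>
      intro i hiN
      have hdvd : r i i ∣ v i := hnf_span_vanish_dvd r hr1 hr2 hv i (fun j hj => by
        have : (j : ℕ) < N := by have := Fin.lt_iff_val_lt_val.mp hj; omega
        exact ih j this)
      exact Int.eq_zero_of_abs_lt_dvd hdvd (hb i)
  funext i; exact key n i i.isLt

include hr1 hr2 in
lemma hnf_red : ∀ (k : ℕ) (t : ℕ), n - t ≤ k → ∀ v : Fin n → ℤ, ∃ c : Fin n → ℤ,
    (∀ j : Fin n, (j : ℕ) < t → c j = 0) ∧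
    ∀ j : Fin n, t ≤ (j : ℕ) →
      0 ≤ (v - ∑ l, c l • r l) j ∧ (v - ∑ l, c l • r l) j < r j j := by
  intro k
  induction k with
  | zero =>
    intro t ht v
    exact ⟨0, fun j _ => rfl, fun j hj => absurd j.isLt (by omega)⟩
  | succ k ih =>
    intro t ht v
    by_cases htn : n ≤ t
    · exact ⟨0, fun j _ => rfl, fun j hj => absurd j.isLt (by omega)⟩
    push_neg at htn
    obtain ⟨i, hit⟩ : ∃ i : Fin n, (i : ℕ) = t := ⟨⟨t, htn⟩, rfl⟩
    obtain ⟨q, hq⟩ : ∃ q : ℤ, q = v i / r i i := ⟨_, rfl⟩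
    obtain ⟨c', hc'1, hc'2⟩ := ih (t + 1) (by omega) (v - q • r i)
    have hci : c' i = 0 := hc'1 i (by omega)
    refine ⟨fun l => c' l + if l = i then q else 0, ?_, ?_⟩
    · intro j hj
      have hji : j ≠ i := by intro h; rw [h, hit] at hj; omega
      show c' j + (if j = i then q else 0) = 0
      rw [hc'1 j (by omega)]; simp [hji]
    · have hsum : ∑ l, (c' l + if l = i then q else 0) • r l
          = (∑ l, c' l • r l) + q • r i := by
        have : ∀ l : Fin n, (c' l + if l = i then q else 0) • r l
            = c' l • r l + (if l = i then q • r l else 0) := by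
          intro l; rw [add_smul, ite_smul, zero_smul]
        simp_rw [this]
        rw [Finset.sum_add_distrib, Finset.sum_ite_eq' Finset.univ i (fun l => q • r l)]
        simp
      have heq : v - ∑ l, (c' l + if l = i then q else 0) • r l
          = (v - q • r i) - ∑ l, c' l • r l := by
        show v - ∑ l, (fun l => c' l + if l = i then q else 0) l • r l = _
        rw [hsum]; abel
      rw [heq]
      intro j hj
      rcases eq_or_lt_of_le hj with hje | hjl
      · have hji : j = i := Fin.ext (by omega)
        subst hji
        have hcoord : ((v - q • r j) - ∑ l, c' l • r l) j
            = v j - q * r j j - ∑ l, c' l * r l j := by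
          simp [Finset.sum_apply, sub_sub]
        have hzero : ∑ l, c' l * r l j = 0 := by
          apply Finset.sum_eq_zero
          intro b _
          rcases lt_trichotomy b j with hlt | heq2 | hgt
          · rw [hc'1 b (by have := Fin.lt_iff_val_lt_val.mp hlt; omega)]; ring
          · subst heq2; rw [hc'1 b (by omega)]; ring
          · rw [hr1 b j hgt]; ring
        rw [hcoord, hzero, sub_zero, hq]
        have h1 : v j - v j / r j j * r j j = v j % r j j := by
          rw [Int.emod_def]; ring
        rw [h1]
        exact ⟨Int.emod_nonneg _ (by have := hr2 j; omega), Int.emod_lt_of_pos _ (hr2 j)⟩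
      · exact hc'2 j (by omega)

include hr1 hr2 in
lemma hnf_card_quot :
    Nat.card ((Fin n → ℤ) ⧸ Submodule.span ℤ (Set.range r)) = ∏ i, (r i i).toNat := by
  set Λ := Submodule.span ℤ (Set.range r) with hΛ
  set f : (∀ i : Fin n, Fin (r i i).toNat) → (Fin n → ℤ) ⧸ Λ :=
    fun x => Submodule.Quotient.mk (fun i => ((x i : ℕ) : ℤ)) with hf
  have hbij : Function.Bijective f := by
    constructor
    · intro a b hab
      have hmem : (fun i => ((a i : ℕ) : ℤ)) - (fun i => ((b i : ℕ) : ℤ)) ∈ Λ :=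
        (Submodule.Quotient.eq Λ).mp hab
      have hz := hnf_box_zero r hr1 hr2 hmem (fun j => by
        have ha := (a j).isLt
        have hb' := (b j).isLt
        have hpos := hr2 j
        have : ((r j j).toNat : ℤ) = r j j := Int.toNat_of_nonneg (le_of_lt hpos)
        rw [abs_lt]
        constructor <;> simp only [Pi.sub_apply] <;> omega)
      funext i
      have := congrFun hz i
      simp only [Pi.sub_apply, Pi.zero_apply, sub_eq_zero] at this
      exact Fin.ext (by exact_mod_cast this)
    · intro y
      obtain ⟨v, rfl⟩ := Submodule.Quotient.mk_surjective Λ y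
      obtain ⟨c, _, hc2⟩ := hnf_red r hr1 hr2 n 0 (by omega) v
      set w := v - ∑ l, c l • r l with hw
      have hwb : ∀ j : Fin n, 0 ≤ w j ∧ w j < r j j := fun j => hc2 j (by omega)
      refine ⟨fun i => ⟨(w i).toNat, ?_⟩, ?_⟩
      · have := hwb i
        have hpos := hr2 i
        omega
      · show Submodule.Quotient.mk _ = Submodule.Quotient.mk v
        rw [Submodule.Quotient.eq]
        have hveq : (fun i : Fin n => (((w i).toNat : ℕ) : ℤ)) = w := by
          funext i
          exact Int.toNat_of_nonneg (hwb i).1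
        rw [hveq]
        have heq2 : w - v = -(∑ l, c l • r l) := by rw [hw]; abel
        rw [heq2]
        exact Submodule.neg_mem _ (Submodule.sum_mem _ (fun l _ =>
          Submodule.smul_mem _ _ (Submodule.subset_span ⟨l, rfl⟩)))
  have := Nat.card_congr (Equiv.ofBijective f hbij)
  rw [← this, Nat.card_pi]
  simp

lemma hnf_exists_pivot (Λ : Submodule ℤ (Fin n → ℤ)) (m : ℕ) (hm : 0 < m)
    (hmem : ∀ v : Fin n → ℤ, (m : ℤ) • v ∈ Λ) (i : Fin n) :
    ∃ d : ℤ, 0 < d ∧ (∃ v ∈ Λ, (∀ j, j < i → v j = 0) ∧ v i = d) ∧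
      (∀ v, v ∈ Λ → (∀ j, j < i → v j = 0) → d ∣ v i) := by
  set J : Ideal ℤ :=
    { carrier := {x | ∃ v ∈ Λ, (∀ j, j < i → v j = 0) ∧ v i = x}
      add_mem' := by
        rintro a b ⟨v, hv, hv0, rfl⟩ ⟨w, hw, hw0, rfl⟩
        exact ⟨v + w, Λ.add_mem hv hw, fun j hj => by
          simp [hv0 j hj, hw0 j hj], rfl⟩
      zero_mem' := ⟨0, Λ.zero_mem, fun j _ => rfl, rfl⟩
      smul_mem' := by
        rintro c a ⟨v, hv, hv0, rfl⟩
        exact ⟨c • v, Λ.smul_mem c hv, fun j hj => by simp [hv0 j hj], by simp⟩ } with hJ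
  have hmJ : (m : ℤ) ∈ J := by
    refine ⟨(m : ℤ) • Pi.single i 1, hmem _, fun j hj => ?_, ?_⟩
    · simp [Pi.single_eq_of_ne (ne_of_lt hj)]
    · simp
  obtain ⟨g, hg⟩ := (IsPrincipalIdealRing.principal J)
  have hgne : g ≠ 0 := by
    rintro rfl
    rw [hg, Submodule.span_zero_singleton, Submodule.mem_bot] at hmJ
    exact_mod_cast absurd hmJ (by positivity)
  have hdvd : ∀ x, x ∈ J ↔ g ∣ x := fun x => by rw [hg]; exact Ideal.mem_span_singleton
  refine ⟨|g|, abs_pos.mpr hgne, ?_, ?_⟩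
  · have : |g| ∈ J := by
      rcases abs_choice g with h | h
      · rw [h]; exact (hdvd g).mpr dvd_rfl
      · rw [h]; exact J.neg_mem ((hdvd g).mpr dvd_rfl)
    obtain ⟨v, hv, hv0, hvi⟩ := this
    exact ⟨v, hv, hv0, hvi⟩
  · intro v hv hv0
    exact (abs_dvd g (v i)).mpr ((hdvd (v i)).mp ⟨v, hv, hv0, rfl⟩)

end HNFAux

/-- For every n ≥ 1 and every positive integer m, the map sending H ∈ HNF_n(m)
to the ℤ-submodule of ℤ^n spanned by the rows of H is a bijection from HNF_n(m) onto the set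
of sublattices of ℤ^n of index m. -/
theorem stmt4 (n : ℕ) (hn : 1 ≤ n) (m : ℕ) (hm : 0 < m) :
    Set.BijOn (fun H : Matrix (Fin n) (Fin n) ℤ =>
        Submodule.span ℤ (Set.range fun i : Fin n => H i))
      (HNFset n (m : ℤ))
      {Λ : Submodule ℤ (Fin n → ℤ) | Nat.card ((Fin n → ℤ) ⧸ Λ) = m} := by
  refine ⟨?_, ?_, ?_⟩
  · -- MapsTo
    intro H hH
    obtain ⟨htri, hdiag, hbox, hdet⟩ := hH
    show Nat.card ((Fin n → ℤ) ⧸ Submodule.span ℤ (Set.range fun i : Fin n => H i)) = m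
    have hcq := hnf_card_quot (fun i : Fin n => H i) (fun j k h => htri j k h) hdiag
    rw [hcq]
    have hdet2 : H.det = ∏ i, H i i :=
      Matrix.det_of_upperTriangular (fun i j hji => htri i j hji)
    have : ((∏ i, (H i i).toNat : ℕ) : ℤ) = (m : ℤ) := by
      push_cast
      rw [Finset.prod_congr rfl (fun i _ => Int.toNat_of_nonneg (le_of_lt (hdiag i)))]
      rw [← hdet2, hdet]
    exact_mod_cast this
  · -- InjOn
    intro H hH H' hH' hspan
    obtain ⟨htri, hdiag, hbox, hdet⟩ := hH
    obtain ⟨htri', hdiag', hbox', hdet'⟩ := hH'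
    simp only at hspan
    have hmemH : ∀ i : Fin n, H i ∈ Submodule.span ℤ (Set.range fun i : Fin n => H' i) := by
      intro i; rw [← hspan]; exact Submodule.subset_span ⟨i, rfl⟩
    have hmemH' : ∀ i : Fin n, H' i ∈ Submodule.span ℤ (Set.range fun i : Fin n => H i) := by
      intro i; rw [hspan]; exact Submodule.subset_span ⟨i, rfl⟩
    have hdiageq : ∀ i : Fin n, H i i = H' i i := by
      intro i
      have h1 : H' i i ∣ H i i :=
        hnf_span_vanish_dvd (fun i => H' i) (fun j k h => htri' j k h) hdiag'
          (hmemH i) i (fun j hj => htri i j hj)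
      have h2 : H i i ∣ H' i i :=
        hnf_span_vanish_dvd (fun i => H i) (fun j k h => htri j k h) hdiag
          (hmemH' i) i (fun j hj => htri' i j hj)
      exact Int.dvd_antisymm (le_of_lt (hdiag i)) (le_of_lt (hdiag' i)) h2 h1
    funext i j
    have hv : H i - H' i ∈ Submodule.span ℤ (Set.range fun i : Fin n => H' i) :=
      Submodule.sub_mem _ (hmemH i) (Submodule.subset_span ⟨i, rfl⟩)
    have hz := hnf_box_zero (fun i => H' i) (fun j k h => htri' j k h) hdiag' hv (fun k => by
      simp only [Pi.sub_apply]
      rcases lt_trichotomy i k with hik | hik | hik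
      · have b1 := hbox i k hik
        have b2 := hbox' i k hik
        rw [hdiageq k] at b1
        rw [abs_lt]; constructor <;> [linarith [b2.1, hdiag' k]; linarith [b1.2, b2.1]]
        -- 0 ≤ H i k < H' k k, 0 ≤ H' i k < H' k k
      · subst hik
        rw [hdiageq i, sub_self, abs_zero]
        exact hdiag' i
      · rw [htri i k hik, htri' i k hik, sub_self, abs_zero]
        exact hdiag' k)
    have := congrFun hz j
    simp only [Pi.sub_apply, Pi.zero_apply, sub_eq_zero] at this
    exact this
  · -- SurjOn
    intro Λ hΛ
    simp only [Set.mem_setOf_eq] at hΛ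
    have hfin : Finite ((Fin n → ℤ) ⧸ Λ) :=
      Nat.finite_of_card_ne_zero (by rw [hΛ]; omega)
    have hmem : ∀ v : Fin n → ℤ, (m : ℤ) • v ∈ Λ := by
      intro v
      have h1 : (Nat.card ((Fin n → ℤ) ⧸ Λ)) • (Submodule.Quotient.mk v : (Fin n → ℤ) ⧸ Λ) = 0 :=
        card_nsmul_eq_zero'
      rw [hΛ] at h1
      have h2 : (Submodule.Quotient.mk ((m : ℤ) • v) : (Fin n → ℤ) ⧸ Λ) = 0 := by
        rw [Submodule.Quotient.mk_smul, ← h1]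
        rw [Nat.cast_smul_eq_nsmul]
      exact (Submodule.Quotient.mk_eq_zero Λ).mp h2
    choose d hd0 hdex hddvd using hnf_exists_pivot Λ m hm hmem
    choose rv hrvΛ hrv0 hrvi using hdex
    have hr1' : ∀ j k : Fin n, k < j → rv j k = 0 := fun j k h => hrv0 j k h
    have hr2' : ∀ j, 0 < rv j j := fun j => by rw [hrvi]; exact hd0 j
    have hred := fun i : Fin n =>
      hnf_red rv hr1' hr2' n ((i : ℕ) + 1) (by omega) (rv i)
    choose cc hcc1 hcc2 using hred
    set H : Matrix (Fin n) (Fin n) ℤ := fun i => rv i - ∑ l, cc i l • rv l with hHdef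
    have hHcoord : ∀ i j : Fin n, H i j = rv i j - ∑ l, cc i l * rv l j := by
      intro i j; simp [hHdef, Finset.sum_apply]
    have hHΛ : ∀ i : Fin n, H i ∈ Λ := by
      intro i
      exact Submodule.sub_mem _ (hrvΛ i) (Submodule.sum_mem _ (fun l _ =>
        Submodule.smul_mem _ _ (hrvΛ l)))
    have hsumz : ∀ i j : Fin n, j ≤ i → ∑ l, cc i l * rv l j = 0 := by
      intro i j hji
      apply Finset.sum_eq_zero
      intro b _
      by_cases hb : (b : ℕ) < (i : ℕ) + 1
      · rw [hcc1 i b hb]; ring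
      · have : j < b := by
          rw [Fin.lt_iff_val_lt_val]
          have := Fin.le_iff_val_le_val.mp hji
          omega
        rw [hr1' b j this]; ring
    have hHlow : ∀ i j : Fin n, j < i → H i j = 0 := by
      intro i j hji
      rw [hHcoord, hrv0 i j hji, hsumz i j (le_of_lt hji), sub_zero]
    have hHdiag : ∀ i : Fin n, H i i = d i := by
      intro i
      rw [hHcoord, hrvi, hsumz i i le_rfl, sub_zero]
    have hHupper : ∀ i j : Fin n, i < j → 0 ≤ H i j ∧ H i j < d j := by
      intro i j hij
      have := hcc2 i j (by have := Fin.lt_iff_val_lt_val.mp hij; omega)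
      rw [hrvi] at this
      exact this
    have hHdiagpos : ∀ i : Fin n, 0 < H i i := fun i => by rw [hHdiag]; exact hd0 i
    have hH1 : ∀ j k : Fin n, k < j → H j k = 0 := fun j k h => hHlow j k h
    -- span of rows of H equals Λ
    have hspan : Submodule.span ℤ (Set.range fun i : Fin n => H i) = Λ := by
      apply le_antisymm
      · rw [Submodule.span_le]
        rintro _ ⟨i, rfl⟩
        exact hHΛ i
      · intro v hv
        obtain ⟨c, _, hc2⟩ := hnf_red (fun i => H i) hH1 hHdiagpos n 0 (by omega) v
        set w := v - ∑ l, c l • H l with hw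
        have hwΛ : w ∈ Λ := Submodule.sub_mem _ hv (Submodule.sum_mem _ (fun l _ =>
          Submodule.smul_mem _ _ (hHΛ l)))
        have hwb : ∀ j : Fin n, 0 ≤ w j ∧ w j < H j j := fun j => hc2 j (by omega)
        have hwz : w = 0 := by
          have key : ∀ N : ℕ, ∀ j : Fin n, (j : ℕ) < N → w j = 0 := by
            intro N
            induction N with
            | zero => intro j hj; omega
            | succ N ih =>
              intro j hjN
              have hdvd : d j ∣ w j := hddvd j w hwΛ (fun k hk => by
                have : (k : ℕ) < N := by have := Fin.lt_iff_val_lt_val.mp hk; omega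
                exact ih k this)
              have hb := hwb j
              rw [hHdiag] at hb
              exact Int.eq_zero_of_abs_lt_dvd hdvd (by rw [abs_of_nonneg hb.1]; exact hb.2)
          funext j; exact key n j j.isLt
        have hveq : v = ∑ l, c l • H l := by
          have : v - ∑ l, c l • H l = 0 := hwz
          linear_combination (norm := abel) this
        rw [hveq]
        exact Submodule.sum_mem _ (fun l _ =>
          Submodule.smul_mem _ _ (Submodule.subset_span ⟨l, rfl⟩))
    have hcard : (∏ i, (H i i).toNat) = m := by
      rw [← hnf_card_quot (fun i : Fin n => H i) hH1 hHdiagpos]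
      rw [show Submodule.span ℤ (Set.range fun i : Fin n => H i) = Λ from hspan, hΛ]
    have hdetH : H.det = (m : ℤ) := by
      rw [Matrix.det_of_upperTriangular (fun i j hji => hHlow i j hji)]
      have : ((∏ i, (H i i).toNat : ℕ) : ℤ) = ∏ i, H i i := by
        push_cast
        exact Finset.prod_congr rfl (fun i _ => Int.toNat_of_nonneg (le_of_lt (hHdiagpos i)))
      rw [← this, hcard]
    refine ⟨H, ⟨hHlow, hHdiagpos, ?_, hdetH⟩, hspan⟩
    intro i j hij
    have := hHupper i j hij
    rw [← hHdiag j] at this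
    exact this
end

section
/- Let n ≥ 1 and let e₁ ∣ e₂ ∣ ⋯ ∣ e_n and f₁ ∣ f₂ ∣ ⋯ ∣ f_n be two chains of positive integers with gcd(e_n, f_n) = 1. Then e₁f₁ ∣ e₂f₂ ∣ ⋯ ∣ e_nf_n and f(e₁f₁, …, e_nf_n) = f(e₁, …, e_n) · f(f₁, …, f_n). -/
open QuotientAddGroup

section Abstract

variable {M A B : Type*} [AddCommGroup M] [AddCommGroup A] [AddCommGroup B]

/-- zsmul as an `AddMonoidHom`. -/
def zsm (c : ℤ) : M →+ M := AddMonoidHom.mk' (fun x => c • x) (fun x y => smul_add c x y)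

@[simp] lemma zsm_apply (c : ℤ) (x : M) : zsm c x = c • x := rfl

lemma combo {a b u v : ℤ} (huv : u * a + v * b = 1) (x : M) :
    u • (a • x) + v • (b • x) = x := by
  rw [smul_smul, smul_smul, ← add_smul, huv, one_smul]

variable {a b : ℕ}

lemma quotA (hab : IsCoprime (a : ℤ) (b : ℤ))
    (hA : ∀ x : A, (a : ℤ) • x = 0) (hB : ∀ y : B, (b : ℤ) • y = 0)
    (Λ : AddSubgroup M) (e : (M ⧸ Λ) ≃+ (A × B)) :
    Nonempty ((M ⧸ Λ.comap (zsm (b : ℤ))) ≃+ A) := by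
  obtain ⟨u, v, huv⟩ := hab
  set φ : M →+ A := (AddMonoidHom.fst A B).comp (e.toAddMonoidHom.comp (mk' Λ)) with hφ
  have hker : φ.ker = Λ.comap (zsm (b : ℤ)) := by
    ext x
    have h1 : x ∈ Λ.comap (zsm (b : ℤ)) ↔ (b : ℤ) • ((mk' Λ) x) = 0 := by
      rw [AddSubgroup.mem_comap, zsm_apply, ← map_zsmul]
      exact (QuotientAddGroup.eq_zero_iff _).symm
    rw [h1]
    have h2 : (b : ℤ) • ((mk' Λ) x) = 0 ↔ (b : ℤ) • e ((mk' Λ) x) = 0 := by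
      rw [← map_zsmul e, map_eq_zero_iff _ e.injective]
    rw [h2]
    have h3 : φ x = (e ((mk' Λ) x)).1 := rfl
    rw [AddMonoidHom.mem_ker, h3]
    constructor
    · intro h
      refine Prod.ext ?_ ?_
      · show (b:ℤ) • (e ((mk' Λ) x)).1 = (0 : A × B).1
        rw [h, smul_zero]; rfl
      · show (b:ℤ) • (e ((mk' Λ) x)).2 = (0 : A × B).2
        rw [hB]; rfl
    · intro h
      have hb : (b:ℤ) • (e ((mk' Λ) x)).1 = 0 := by
        have : ((b:ℤ) • e ((mk' Λ) x)).1 = (0 : A × B).1 := by rw [h]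
        rwa [Prod.smul_fst] at this
      have := combo huv (e ((mk' Λ) x)).1
      rw [hA, smul_zero, zero_add, hb, smul_zero] at this
      exact this.symm
  have hsurj : Function.Surjective φ := by
    intro α
    obtain ⟨q, hq⟩ := e.surjective (α, 0)
    obtain ⟨x, hx⟩ := mk'_surjective Λ q
    refine ⟨x, ?_⟩
    show (e ((mk' Λ) x)).1 = α
    rw [hx, hq]
  exact ⟨(quotientAddEquivOfEq hker.symm).trans (quotientKerEquivOfSurjective φ hsurj)⟩

lemma quotProd (hab : IsCoprime (a : ℤ) (b : ℤ))
    (hA : ∀ x : A, (a : ℤ) • x = 0) (hB : ∀ y : B, (b : ℤ) • y = 0)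
    (Λ₁ Λ₂ : AddSubgroup M) (e₁ : (M ⧸ Λ₁) ≃+ A) (e₂ : (M ⧸ Λ₂) ≃+ B) :
    Nonempty ((M ⧸ (Λ₁ ⊓ Λ₂)) ≃+ (A × B)) := by
  obtain ⟨u, v, huv⟩ := hab
  set φ : M →+ A × B := (e₁.toAddMonoidHom.comp (mk' Λ₁)).prod
    (e₂.toAddMonoidHom.comp (mk' Λ₂)) with hφ
  have hker : φ.ker = Λ₁ ⊓ Λ₂ := by
    ext x
    have h3 : φ x = (e₁ ((mk' Λ₁) x), e₂ ((mk' Λ₂) x)) := rfl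
    rw [AddMonoidHom.mem_ker, h3, Prod.mk_eq_zero, map_eq_zero_iff _ e₁.injective,
      map_eq_zero_iff _ e₂.injective, QuotientAddGroup.mk'_apply, QuotientAddGroup.mk'_apply,
      QuotientAddGroup.eq_zero_iff, QuotientAddGroup.eq_zero_iff, AddSubgroup.mem_inf]
  have hsurj : Function.Surjective φ := by
    rintro ⟨α, β⟩
    obtain ⟨q₁, hq₁⟩ := e₁.surjective α
    obtain ⟨x, hx⟩ := mk'_surjective Λ₁ q₁
    obtain ⟨q₂, hq₂⟩ := e₂.surjective β
    obtain ⟨y, hy⟩ := mk'_surjective Λ₂ q₂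
    refine ⟨v • ((b:ℤ) • x) + u • ((a:ℤ) • y), ?_⟩
    have h3 : φ _ = (e₁ ((mk' Λ₁) (v • ((b:ℤ) • x) + u • ((a:ℤ) • y))),
        e₂ ((mk' Λ₂) (v • ((b:ℤ) • x) + u • ((a:ℤ) • y)))) := rfl
    rw [h3]
    refine Prod.ext ?_ ?_
    · show e₁ ((mk' Λ₁) (v • ((b:ℤ) • x) + u • ((a:ℤ) • y))) = α
      rw [map_add, map_zsmul, map_zsmul, map_zsmul, map_zsmul, map_add, map_zsmul, map_zsmul,
        map_zsmul, map_zsmul, hx, hq₁]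
      rw [hA, smul_zero, add_zero]
      have := combo huv α
      rw [hA, smul_zero, zero_add] at this
      exact this
    · show e₂ ((mk' Λ₂) (v • ((b:ℤ) • x) + u • ((a:ℤ) • y))) = β
      rw [map_add, map_zsmul, map_zsmul, map_zsmul, map_zsmul, map_add, map_zsmul, map_zsmul,
        map_zsmul, map_zsmul, hy, hq₂]
      rw [hB, smul_zero, zero_add]
      have := combo huv β
      rw [hB, smul_zero, add_zero] at this
      exact this
  exact ⟨(quotientAddEquivOfEq hker.symm).trans (quotientKerEquivOfSurjective φ hsurj)⟩

/-- The key bijection: subgroups with quotient `A × B` correspond to pairs of subgroups with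
quotients `A` and `B`, when `A` is killed by `a`, `B` is killed by `b`, and `a`, `b` coprime. -/
noncomputable def theEquiv (hab : IsCoprime (a : ℤ) (b : ℤ))
    (hA : ∀ x : A, (a : ℤ) • x = 0) (hB : ∀ y : B, (b : ℤ) • y = 0) :
    {Λ : AddSubgroup M // Nonempty ((M ⧸ Λ) ≃+ (A × B))} ≃
      {Λ : AddSubgroup M // Nonempty ((M ⧸ Λ) ≃+ A)} ×
      {Λ : AddSubgroup M // Nonempty ((M ⧸ Λ) ≃+ B)} where
  toFun Λ := ⟨⟨Λ.1.comap (zsm (b : ℤ)), Λ.2.elim fun e => quotA hab hA hB Λ.1 e⟩,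
    ⟨Λ.1.comap (zsm (a : ℤ)), Λ.2.elim fun e =>
      quotA hab.symm hB hA Λ.1 (e.trans (AddEquiv.prodComm : A × B ≃+ B × A))⟩⟩
  invFun P := ⟨P.1.1 ⊓ P.2.1,
    P.1.2.elim fun e₁ => P.2.2.elim fun e₂ => quotProd hab hA hB P.1.1 P.2.1 e₁ e₂⟩
  left_inv := by
    rintro ⟨Λ, hΛ⟩
    obtain ⟨u, v, huv⟩ := hab
    apply Subtype.ext
    show Λ.comap (zsm (b:ℤ)) ⊓ Λ.comap (zsm (a:ℤ)) = Λ
    ext x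
    simp only [AddSubgroup.mem_inf, AddSubgroup.mem_comap, zsm_apply]
    constructor
    · rintro ⟨h1, h2⟩
      have := combo huv x
      rw [← this]
      exact Λ.add_mem (Λ.zsmul_mem h2 u) (Λ.zsmul_mem h1 v)
    · intro h
      exact ⟨Λ.zsmul_mem h _, Λ.zsmul_mem h _⟩
  right_inv := by
    rintro ⟨⟨Λ₁, hΛ₁⟩, ⟨Λ₂, hΛ₂⟩⟩
    obtain ⟨u, v, huv⟩ := hab
    obtain ⟨e₁⟩ := hΛ₁
    obtain ⟨e₂⟩ := hΛ₂
    have ha1 : ∀ x : M, (a : ℤ) • x ∈ Λ₁ := by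
      intro x
      have h0 : (mk' Λ₁) ((a:ℤ) • x) = 0 := by
        apply e₁.injective
        rw [map_zsmul, map_zsmul, hA, map_zero]
      exact (QuotientAddGroup.eq_zero_iff _).mp h0
    have hb2 : ∀ x : M, (b : ℤ) • x ∈ Λ₂ := by
      intro x
      have h0 : (mk' Λ₂) ((b:ℤ) • x) = 0 := by
        apply e₂.injective
        rw [map_zsmul, map_zsmul, hB, map_zero]
      exact (QuotientAddGroup.eq_zero_iff _).mp h0
    have key1 : (Λ₁ ⊓ Λ₂).comap (zsm (b:ℤ)) = Λ₁ := by
      ext x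
      simp only [AddSubgroup.mem_comap, zsm_apply, AddSubgroup.mem_inf]
      constructor
      · rintro ⟨h1, _⟩
        have := combo huv x
        rw [← this]
        exact Λ₁.add_mem (Λ₁.zsmul_mem (ha1 x) u) (Λ₁.zsmul_mem h1 v)
      · intro h
        exact ⟨Λ₁.zsmul_mem h _, hb2 x⟩
    have key2 : (Λ₁ ⊓ Λ₂).comap (zsm (a:ℤ)) = Λ₂ := by
      ext x
      simp only [AddSubgroup.mem_comap, zsm_apply, AddSubgroup.mem_inf]
      constructor
      · rintro ⟨_, h2⟩
        have := combo huv x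
        rw [← this]
        exact Λ₂.add_mem (Λ₂.zsmul_mem h2 u) (Λ₂.zsmul_mem (hb2 x) v)
      · intro h
        exact ⟨ha1 x, Λ₂.zsmul_mem h _⟩
    exact Prod.ext (Subtype.ext key1) (Subtype.ext key2)

lemma card_eq_mul (hab : IsCoprime (a : ℤ) (b : ℤ))
    (hA : ∀ x : A, (a : ℤ) • x = 0) (hB : ∀ y : B, (b : ℤ) • y = 0) :
    Nat.card {Λ : AddSubgroup M // Nonempty ((M ⧸ Λ) ≃+ (A × B))} =
      Nat.card {Λ : AddSubgroup M // Nonempty ((M ⧸ Λ) ≃+ A)} *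
      Nat.card {Λ : AddSubgroup M // Nonempty ((M ⧸ Λ) ≃+ B)} := by
  rw [Nat.card_congr (theEquiv hab hA hB), Nat.card_prod]

end Abstract

section Bridge

variable {M : Type*} [AddCommGroup M] [Module ℤ M] (X : Type*) [AddCommGroup X]

/-- Submodules over ℤ are the same as additive subgroups, compatibly with quotients. -/
def subEquiv : {Λ : Submodule ℤ M // Nonempty ((M ⧸ Λ) ≃+ X)} ≃
    {S : AddSubgroup M // Nonempty ((M ⧸ S) ≃+ X)} where
  toFun Λ := ⟨Λ.1.toAddSubgroup, Λ.2⟩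
  invFun S := ⟨{ carrier := S.1
                 add_mem' := fun h1 h2 => S.1.add_mem h1 h2
                 zero_mem' := S.1.zero_mem
                 smul_mem' := by
                   intro c x hx
                   have h := Int.cast_smul_eq_zsmul (R := ℤ) (M := M) c x
                   rw [Int.cast_id] at h
                   exact h.symm ▸ S.1.zsmul_mem hx c }, S.2⟩
  left_inv Λ := Subtype.ext (by ext x; rfl)
  right_inv S := Subtype.ext (by ext x; rfl)

def targetEquiv {X Y : Type*} [AddCommGroup X] [AddCommGroup Y] (c : X ≃+ Y) :
    {S : AddSubgroup M // Nonempty ((M ⧸ S) ≃+ X)} ≃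
    {S : AddSubgroup M // Nonempty ((M ⧸ S) ≃+ Y)} :=
  Equiv.subtypeEquivRight fun S =>
    ⟨fun h => h.elim fun g => ⟨g.trans c⟩, fun h => h.elim fun g => ⟨g.trans c.symm⟩⟩

end Bridge

/-- componentwise splitting of a Pi of products -/
def piProd {ι : Type*} (X Y : ι → Type*) [∀ i, AddCommGroup (X i)] [∀ i, AddCommGroup (Y i)] :
    (∀ i, X i × Y i) ≃+ (∀ i, X i) × (∀ i, Y i) where
  toFun g := (fun i => (g i).1, fun i => (g i).2)
  invFun p i := (p.1 i, p.2 i)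
  left_inv g := rfl
  right_inv p := rfl
  map_add' g h := rfl

/-- f(d₁, …, d_n): the number of ℤ-submodules Λ of ℤ^n with
ℤ^n/Λ ≅ (ℤ/d₁ℤ) × ⋯ × (ℤ/d_nℤ) as abelian groups. -/
noncomputable def fInv {n : ℕ} (d : Fin n → ℕ) : ℕ :=
  Nat.card {Λ : Submodule ℤ (Fin n → ℤ) //
    Nonempty (((Fin n → ℤ) ⧸ Λ) ≃+ ((i : Fin n) → ZMod (d i)))}

/-- Let n ≥ 1 and let e₁ ∣ ⋯ ∣ e_n and f₁ ∣ ⋯ ∣ f_n be chains of positive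
integers with gcd(e_n, f_n) = 1. Then e₁f₁ ∣ ⋯ ∣ e_nf_n and
f(e₁f₁, …, e_nf_n) = f(e₁, …, e_n) · f(f₁, …, f_n). -/
theorem stmt7 (n : ℕ) (hn : 1 ≤ n) (e f : Fin n → ℕ)
    (he : ∀ i, 0 < e i) (hf : ∀ i, 0 < f i)
    (hechain : ∀ i j : Fin n, i ≤ j → e i ∣ e j)
    (hfchain : ∀ i j : Fin n, i ≤ j → f i ∣ f j)
    (hcop : Nat.Coprime (e ⟨n - 1, by omega⟩) (f ⟨n - 1, by omega⟩)) :
    (∀ i j : Fin n, i ≤ j → e i * f i ∣ e j * f j) ∧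
    fInv (fun i => e i * f i) = fInv e * fInv f := by
  refine ⟨fun i j h => mul_dvd_mul (hechain i j h) (hfchain i j h), ?_⟩
  set N : Fin n := ⟨n - 1, by omega⟩ with hN
  have hle : ∀ i : Fin n, i ≤ N := by
    intro i
    have := i.isLt
    rw [Fin.le_def]
    simp only [hN]
    omega
  have hab : IsCoprime ((e N : ℕ) : ℤ) ((f N : ℕ) : ℤ) := Nat.isCoprime_iff_coprime.mpr hcop
  have hA : ∀ x : (∀ i, ZMod (e i)), ((e N : ℕ) : ℤ) • x = 0 := by
    intro x
    funext i
    show ((e N : ℕ) : ℤ) • x i = 0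
    rw [natCast_zsmul, nsmul_eq_mul,
      (ZMod.natCast_eq_zero_iff (e N) (e i)).mpr (hechain i N (hle i)), zero_mul]
  have hB : ∀ x : (∀ i, ZMod (f i)), ((f N : ℕ) : ℤ) • x = 0 := by
    intro x
    funext i
    show ((f N : ℕ) : ℤ) • x i = 0
    rw [natCast_zsmul, nsmul_eq_mul,
      (ZMod.natCast_eq_zero_iff (f N) (f i)).mpr (hfchain i N (hle i)), zero_mul]
  have cop : ∀ i, (e i).Coprime (f i) := fun i =>
    Nat.Coprime.coprime_dvd_left (hechain i N (hle i))
      (Nat.Coprime.coprime_dvd_right (hfchain i N (hle i)) hcop)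
  have crt : (∀ i, ZMod (e i * f i)) ≃+ ((∀ i, ZMod (e i)) × (∀ i, ZMod (f i))) :=
    (AddEquiv.piCongrRight fun i => (ZMod.chineseRemainder (cop i)).toAddEquiv).trans
      (piProd _ _)
  unfold fInv
  rw [Nat.card_congr (subEquiv _), Nat.card_congr (subEquiv _), Nat.card_congr (subEquiv _),
    Nat.card_congr (targetEquiv crt)]
  exact card_eq_mul hab hA hB
end

section
/- Let n ≥ 2 and let H be an n×n integer matrix whose first column equals (h₁, 0, …, 0)ᵀ for some integer h₁. Let H' be the (n−1)×(n−1) matrix obtained from H by deleting the first row and the first column, and let H'' be the n×(n−1) matrix obtained from H by deleting the first column. Then for every 1 ≤ k ≤ n−1, D_k(H) = gcd(h₁ · D_{k−1}(H'), D_k(H'')). -/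
/-- D_k(M): the gcd of the determinants of all k×k submatrices of M (choosing k rows and
k columns); D₀(M) = 1 since the empty matrix has determinant 1. -/
noncomputable def Dk {m n : ℕ} (M : Matrix (Fin m) (Fin n) ℤ) (k : ℕ) : ℤ :=
  Finset.univ.gcd (fun rc : (Fin k ↪ Fin m) × (Fin k ↪ Fin n) =>
    (M.submatrix rc.1 rc.2).det)

namespace Stmt11Aux

/-- Prepend `0` to an embedding, shifting everything else by `succ`. -/
def consEmb {k m : ℕ} (e : Fin k ↪ Fin m) : Fin (k + 1) ↪ Fin (m + 1) :=
  ⟨Fin.cons 0 (fun j => (e j).succ), by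
    intro a b h
    induction a using Fin.cases with
    | zero =>
      induction b using Fin.cases with
      | zero => rfl
      | succ j =>
        simp only [Fin.cons_zero, Fin.cons_succ] at h
        exact absurd h.symm (Fin.succ_ne_zero _)
    | succ i =>
      induction b using Fin.cases with
      | zero =>
        simp only [Fin.cons_zero, Fin.cons_succ] at h
        exact absurd h (Fin.succ_ne_zero _)
      | succ j =>
        simp only [Fin.cons_succ, Fin.succ_inj] at h
        rw [e.injective h]⟩

@[simp] lemma consEmb_zero {k m : ℕ} (e : Fin k ↪ Fin m) : consEmb e 0 = 0 := rfl

@[simp] lemma consEmb_succ {k m : ℕ} (e : Fin k ↪ Fin m) (j : Fin k) :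
    consEmb e j.succ = (e j).succ := rfl

/-- An embedding avoiding `0` factors through `Fin.succ`. -/
lemma exists_predEmb {t s : ℕ} (f : Fin t → Fin (s + 1)) (hinj : Function.Injective f)
    (hf : ∀ i, f i ≠ 0) :
    ∃ e : Fin t ↪ Fin s, ∀ i, (e i).succ = f i := by
  refine ⟨⟨fun i => (f i).pred (hf i), ?_⟩, fun i => Fin.succ_pred (f i) (hf i)⟩
  intro a b h
  apply hinj
  rw [← Fin.succ_pred (f a) (hf a), ← Fin.succ_pred (f b) (hf b)]
  exact congrArg Fin.succ h

/-- Determinant of a matrix whose first column is `(d, 0, …, 0)ᵀ`. -/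
lemma det_special {k : ℕ} (M : Matrix (Fin (k + 1)) (Fin (k + 1)) ℤ)
    (h : ∀ i, i ≠ 0 → M i 0 = 0) :
    M.det = M 0 0 * (M.submatrix Fin.succ Fin.succ).det := by
  rw [Matrix.det_succ_column_zero, Fin.sum_univ_succ]
  simp [h _ (Fin.succ_ne_zero _)]

end Stmt11Aux

set_option maxHeartbeats 1000000 in
open Stmt11Aux in
/-- Let n = m+1 ≥ 2 and let H be an n×n integer matrix whose first column is
(h₁, 0, …, 0)ᵀ. Let H' be H with the first row and column deleted and H'' be H with the first
column deleted. Then for 1 ≤ k ≤ n−1, D_k(H) = gcd(h₁·D_{k−1}(H'), D_k(H'')). -/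
theorem stmt11 (m : ℕ) (hm : 1 ≤ m) (H : Matrix (Fin (m + 1)) (Fin (m + 1)) ℤ) (h₁ : ℤ)
    (hcol₀ : H 0 0 = h₁) (hcol : ∀ i : Fin (m + 1), i ≠ 0 → H i 0 = 0) :
    ∀ k : ℕ, 1 ≤ k → k ≤ m →
      Dk H k = gcd (h₁ * Dk (H.submatrix Fin.succ Fin.succ) (k - 1))
        (Dk (H.submatrix id Fin.succ) k) := by
  intro k hk1 hkm
  obtain ⟨k', rfl⟩ : ∃ k', k = k' + 1 := ⟨k - 1, (Nat.succ_pred_eq_of_pos hk1).symm⟩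
  simp only [Nat.add_sub_cancel]
  set H' := H.submatrix Fin.succ Fin.succ with hH'
  set H'' := H.submatrix id Fin.succ with hH''
  -- generic determinant computation for submatrices whose row/col embeddings hit 0 at 0
  have key : ∀ (r c : Fin (k' + 1) ↪ Fin (m + 1)), r 0 = 0 → c 0 = 0 →
      ∃ rc' : (Fin k' ↪ Fin m) × (Fin k' ↪ Fin m),
        (∀ i, (rc'.1 i).succ = r i.succ) ∧ (∀ i, (rc'.2 i).succ = c i.succ) ∧
        (H.submatrix r c).det = h₁ * (H'.submatrix rc'.1 rc'.2).det := by
    intro r c hr0 hc0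
    have hrne : ∀ j : Fin k', r j.succ ≠ 0 := fun j h =>
      Fin.succ_ne_zero j (r.injective (h.trans hr0.symm))
    have hcne : ∀ j : Fin k', c j.succ ≠ 0 := fun j h =>
      Fin.succ_ne_zero j (c.injective (h.trans hc0.symm))
    obtain ⟨r', hr'⟩ := exists_predEmb (fun j : Fin k' => r j.succ)
      (fun a b h => Fin.succ_injective _ (r.injective h)) hrne
    obtain ⟨c', hc'⟩ := exists_predEmb (fun j : Fin k' => c j.succ)
      (fun a b h => Fin.succ_injective _ (c.injective h)) hcne
    refine ⟨(r', c'), hr', hc', ?_⟩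
    have hd := det_special (H.submatrix r c) (fun i hi => ?_)
    · rw [hd]
      have e0 : H.submatrix (⇑r) (⇑c) 0 0 = h₁ := by
        simp [Matrix.submatrix_apply, hr0, hc0, hcol₀]
      have e2 : (H.submatrix ⇑r ⇑c).submatrix Fin.succ Fin.succ = H'.submatrix ⇑r' ⇑c' := by
        ext i j
        simp only [Matrix.submatrix_apply, hH']
        rw [← hr' i, ← hc' j]
      rw [e0, e2]
    · obtain ⟨j, rfl⟩ := Fin.eq_succ_of_ne_zero hi
      simp only [Matrix.submatrix_apply, hc0]
      exact hcol _ (hrne j)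
  have nonnegL : 0 ≤ Dk H (k' + 1) :=
    Int.nonneg_of_normalize_eq_self Finset.normalize_gcd
  have nonnegR : 0 ≤ gcd (h₁ * Dk H' k') (Dk H'' (k' + 1)) :=
    Int.nonneg_of_normalize_eq_self (normalize_gcd _ _)
  refine Int.dvd_antisymm nonnegL nonnegR ?_ ?_
  · -- Dk H ∣ gcd(h₁ * Dk H' k', Dk H'')
    refine dvd_gcd ?_ ?_
    · -- Dk H ∣ h₁ * Dk H' k'
      have h1 : Dk H (k' + 1) ∣
          Finset.univ.gcd (fun rc : (Fin k' ↪ Fin m) × (Fin k' ↪ Fin m) =>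
            h₁ * (H'.submatrix rc.1 rc.2).det) := by
        refine Finset.dvd_gcd fun rc _ => ?_
        obtain ⟨rc', hre, hce, hdet⟩ := key (consEmb rc.1) (consEmb rc.2) rfl rfl
        have h2 : (H'.submatrix ⇑rc'.1 ⇑rc'.2) = (H'.submatrix ⇑rc.1 ⇑rc.2) := by
          have e1 : ∀ i, rc'.1 i = rc.1 i := fun i =>
            Fin.succ_injective _ ((hre i).trans (consEmb_succ rc.1 i))
          have e2 : ∀ i, rc'.2 i = rc.2 i := fun i =>
            Fin.succ_injective _ ((hce i).trans (consEmb_succ rc.2 i))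
          ext i j
          rw [Matrix.submatrix_apply, Matrix.submatrix_apply, e1, e2]
        rw [← h2, ← hdet]
        exact Finset.gcd_dvd (Finset.mem_univ (consEmb rc.1, consEmb rc.2))
      rw [Finset.gcd_mul_left] at h1
      exact h1.trans ((Associated.mul_right (normalize_associated h₁) _).dvd)
    · -- Dk H ∣ Dk H''
      refine Finset.dvd_gcd fun rc _ => ?_
      have : (H''.submatrix rc.1 rc.2) =
          H.submatrix rc.1 (rc.2.trans (Fin.succEmb m)) := rfl
      rw [this]
      exact Finset.gcd_dvd (Finset.mem_univ (rc.1, rc.2.trans (Fin.succEmb m)))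
  · -- gcd ∣ Dk H
    refine Finset.dvd_gcd fun rc _ => ?_
    obtain ⟨r, c⟩ := rc
    by_cases hc : ∃ j, c j = 0
    · obtain ⟨j, hj⟩ := hc
      by_cases hr : ∃ i, r i = 0
      · obtain ⟨i₀, hi₀⟩ := hr
        set σ : Equiv.Perm (Fin (k' + 1)) := Equiv.swap 0 i₀ with hσ
        set τ : Equiv.Perm (Fin (k' + 1)) := Equiv.swap 0 j with hτ
        set r₂ : Fin (k' + 1) ↪ Fin (m + 1) := σ.toEmbedding.trans r with hr₂
        set c₂ : Fin (k' + 1) ↪ Fin (m + 1) := τ.toEmbedding.trans c with hc₂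
        have hdet2 : (H.submatrix r₂ c₂).det =
            (σ.sign : ℤ) * ((τ.sign : ℤ) * (H.submatrix r c).det) := by
          have e1 : (H.submatrix r₂ c₂) = ((H.submatrix r c).submatrix id τ).submatrix σ id := rfl
          rw [e1, Matrix.det_permute, Matrix.det_permute']
          push_cast
          ring
        obtain ⟨rc', -, -, hdet⟩ := key r₂ c₂ (by simp [hr₂, hσ, hi₀]) (by simp [hc₂, hτ, hj])
        have hdvd : gcd (h₁ * Dk H' k') (Dk H'' (k' + 1)) ∣ (H.submatrix r₂ c₂).det := by
          rw [hdet]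
          exact (gcd_dvd_left _ _).trans
            (mul_dvd_mul_left h₁ (Finset.gcd_dvd (Finset.mem_univ rc')))
        rw [hdet2] at hdvd
        rcases Int.units_eq_one_or σ.sign with hs | hs <;>
          rcases Int.units_eq_one_or τ.sign with ht | ht <;>
            rw [hs, ht] at hdvd <;> simpa using hdvd
      · -- no row hits 0 : the j-th column of the submatrix vanishes
        push_neg at hr
        have : (H.submatrix r c).det = 0 :=
          Matrix.det_eq_zero_of_column_eq_zero j (fun i => by
            simp only [Matrix.submatrix_apply, hj]
            exact hcol _ (hr i))
        simp [this]
    · -- column 0 not selected : it's a minor of H''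
      push_neg at hc
      obtain ⟨c', hc'⟩ := exists_predEmb c c.injective hc
      have : (H.submatrix r c) = H''.submatrix r c' := by
        ext i j
        simp only [Matrix.submatrix_apply, hH'', id]
        rw [← hc' j]
      rw [this]
      exact (gcd_dvd_right _ _).trans (Finset.gcd_dvd (Finset.mem_univ (r, c')))
end

section
/- Let n ≥ 1 and let Λ₁ and Λ₂ be co-cyclic sublattices of ℤ^n of the same finite index m. Then Λ₁ and Λ₂ are unimodular equivalent, i.e., there exists a ℤ-module automorphism σ of ℤ^n with σ(Λ₁) = Λ₂. -/
/-!
A co-cyclic sublattice of index `m` is the kernel of a surjection `π : ℤⁿ → ℤ/m`. Lift `π` to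
`L : ℤⁿ → ℤ` and let `g = L v` generate the image of `L`; surjectivity of `π` makes `g` a
unit mod `m`. Completing `v` by a basis of `ker L` gives coordinates in which `π x = g x₀`,
so `ker π` is the image of the standard lattice `{x | x₀ ≡ 0 [ZMOD m]}` under an automorphism.
-/

open LinearMap Module

theorem LinearMap.exists_finBasis_zero_eq_apply_succ_eq_zero {R M : Type*} [CommRing R]
    [IsDomain R] [IsPrincipalIdealRing R] [AddCommGroup M] [Module R M] [Free R M]
    [Module.Finite R M] (L : M →ₗ[R] R) {n : ℕ} (hM : finrank R M = n + 1) (v : M)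
    (hv : L v ≠ 0) (hdvd : ∀ x, L v ∣ L x) :
    ∃ b : Basis (Fin (n + 1)) R M, b 0 = v ∧ ∀ i : Fin n, L (b i.succ) = 0 := by
  obtain ⟨k, bK⟩ := (ker L).basisOfPid (Free.chooseBasis R M)
  have hli : ∀ (c : R), ∀ x ∈ ker L, c • v + x = 0 → c = 0 := by
    intro c x hx h
    have := congrArg L h
    rw [map_add, map_smul, mem_ker.mp hx, add_zero, smul_eq_mul, map_zero] at this
    exact (mul_eq_zero.mp this).resolve_right hv
  have hsp : ∀ z : M, ∃ c : R, z + c • v ∈ ker L := by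
    intro z
    obtain ⟨t, ht⟩ := hdvd z
    exact ⟨-t, by simp [ht, mul_comm]⟩
  let b := Basis.mkFinCons v bK hli hsp
  have hk : k + 1 = n + 1 := by rw [← hM, finrank_eq_card_basis b, Fintype.card_fin]
  exact ⟨b.reindex (finCongr hk), by simp [b], fun i => by simp [b]⟩

theorem Submodule.exists_surjective_zmod_ker_eq {M : Type*} [AddCommGroup M] {m : ℕ}
    (Λ : Submodule ℤ M) (hcyc : IsAddCyclic (M ⧸ Λ)) (hcard : Nat.card (M ⧸ Λ) = m) :
    ∃ π : M →ₗ[ℤ] ZMod m, Function.Surjective π ∧ ker π = Λ := by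
  subst hcard
  let e : (M ⧸ Λ) ≃ₗ[ℤ] ZMod (Nat.card (M ⧸ Λ)) :=
    (zmodAddCyclicAddEquiv hcyc).symm.toIntLinearEquiv
  exact ⟨e.toLinearMap ∘ₗ Λ.mkQ, e.surjective.comp Λ.mkQ_surjective, by
    rw [LinearEquiv.ker_comp, Submodule.ker_mkQ]⟩

def castCoordZero (n m : ℕ) : (Fin (n + 1) → ℤ) →ₗ[ℤ] ZMod m :=
  Algebra.linearMap ℤ (ZMod m) ∘ₗ proj 0

theorem LinearMap.exists_linearEquiv_map_ker_castCoordZero_eq_ker {n m : ℕ}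
    (π : (Fin (n + 1) → ℤ) →ₗ[ℤ] ZMod m) (hπ : Function.Surjective π) :
    ∃ σ : (Fin (n + 1) → ℤ) ≃ₗ[ℤ] (Fin (n + 1) → ℤ),
      (ker (castCoordZero n m)).map (σ : (Fin (n + 1) → ℤ) →ₗ[ℤ] _) = ker π := by
  rcases subsingleton_or_nontrivial (ZMod m) with hm | hm
  · exact ⟨LinearEquiv.refl ℤ _, by simp [ker_eq_top.mpr (Subsingleton.elim π 0),
      ker_eq_top.mpr (Subsingleton.elim (castCoordZero n m) 0)]⟩
  obtain ⟨L, hL⟩ := projective_lifting_property (Algebra.linearMap ℤ (ZMod m)) π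
    ZMod.intCast_surjective
  have hπL : ∀ x, π x = L x := fun x => by rw [← hL]; simp
  obtain ⟨v, hv⟩ := Submodule.IsPrincipal.generator_mem (range L)
  have hdvd : ∀ x, L v ∣ L x := fun x => hv ▸
    (Submodule.IsPrincipal.mem_iff_generator_dvd _).mp (mem_range_self L x)
  have hunit : IsUnit (L v : ZMod m) := by
    obtain ⟨x, hx⟩ := hπ 1
    obtain ⟨t, ht⟩ := hdvd x
    exact IsUnit.of_mul_eq_one (t : ZMod m) (by rw [← Int.cast_mul, ← ht, ← hπL, hx])
  have hv0 : L v ≠ 0 := fun h => not_isUnit_zero (by rwa [h, Int.cast_zero] at hunit)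
  obtain ⟨b, hb0, hbs⟩ :=
    L.exists_finBasis_zero_eq_apply_succ_eq_zero (finrank_fin_fun ℤ) v hv0 hdvd
  have hLσ : ∀ x, L (b.equivFun.symm x) = x 0 * L v := fun x => by
    rw [Basis.equivFun_symm_apply, Fin.sum_univ_succ, map_add, map_sum, map_smul, hb0]
    simp only [map_smul, hbs, smul_eq_mul, mul_zero, Finset.sum_const_zero, add_zero]
  refine ⟨b.equivFun.symm, Submodule.ext fun y => ?_⟩
  obtain ⟨x, rfl⟩ := b.equivFun.symm.surjective y
  rw [Submodule.mem_map_equiv, LinearEquiv.symm_apply_apply, mem_ker, mem_ker, hπL, hLσ]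
  simp [castCoordZero, hunit.mul_left_eq_zero]

theorem stmt14_general (n : ℕ) (hn : 1 ≤ n) (m : ℕ)
    (Λ₁ Λ₂ : Submodule ℤ (Fin n → ℤ))
    (hidx₁ : Nat.card ((Fin n → ℤ) ⧸ Λ₁) = m) (hidx₂ : Nat.card ((Fin n → ℤ) ⧸ Λ₂) = m)
    (hcyc₁ : IsAddCyclic ((Fin n → ℤ) ⧸ Λ₁)) (hcyc₂ : IsAddCyclic ((Fin n → ℤ) ⧸ Λ₂)) :
    ∃ σ : (Fin n → ℤ) ≃ₗ[ℤ] (Fin n → ℤ), Submodule.map σ.toLinearMap Λ₁ = Λ₂ := by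
  obtain ⟨n, rfl⟩ : ∃ k, n = k + 1 := ⟨n - 1, by omega⟩
  obtain ⟨π₁, hπ₁, rfl⟩ := Λ₁.exists_surjective_zmod_ker_eq hcyc₁ hidx₁
  obtain ⟨π₂, hπ₂, rfl⟩ := Λ₂.exists_surjective_zmod_ker_eq hcyc₂ hidx₂
  obtain ⟨σ₁, h₁⟩ := π₁.exists_linearEquiv_map_ker_castCoordZero_eq_ker hπ₁
  obtain ⟨σ₂, h₂⟩ := π₂.exists_linearEquiv_map_ker_castCoordZero_eq_ker hπ₂
  refine ⟨σ₁.symm.trans σ₂, ?_⟩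
  rw [← h₁, ← h₂, LinearEquiv.coe_trans, Submodule.map_comp,
    (Submodule.map_symm_eq_iff σ₁).mpr rfl]

/-- Let n ≥ 1 and let Λ₁ and Λ₂ be co-cyclic sublattices of ℤ^n of the same
finite index m. Then Λ₁ and Λ₂ are unimodular equivalent: there is a ℤ-module automorphism σ
of ℤ^n with σ(Λ₁) = Λ₂. -/
theorem stmt14 (n : ℕ) (hn : 1 ≤ n) (m : ℕ) (hm : 0 < m)
    (Λ₁ Λ₂ : Submodule ℤ (Fin n → ℤ))
    (hidx₁ : Nat.card ((Fin n → ℤ) ⧸ Λ₁) = m) (hidx₂ : Nat.card ((Fin n → ℤ) ⧸ Λ₂) = m)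
    (hcyc₁ : IsAddCyclic ((Fin n → ℤ) ⧸ Λ₁)) (hcyc₂ : IsAddCyclic ((Fin n → ℤ) ⧸ Λ₂)) :
    ∃ σ : (Fin n → ℤ) ≃ₗ[ℤ] (Fin n → ℤ), Submodule.map σ.toLinearMap Λ₁ = Λ₂ :=
  stmt14_general n hn m Λ₁ Λ₂ hidx₁ hidx₂ hcyc₁ hcyc₂
end

section
/- Let n ≥ 1, let p be a prime, and let r ≥ 1. The number of sublattices Λ of ℤ^n such that ℤ^n/Λ is a cyclic group of order p^r equals p^{(n−1)(r−1)} · (p^n − 1)/(p − 1) = p^{(n−1)(r−1)} · (1 + p + ⋯ + p^{n−1}). -/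
/-!
A co-cyclic sublattice `Λ` of index `m` is the kernel of a surjection `ℤⁿ → ℤ/m`, and two
surjections have the same kernel exactly when they differ by a unit of `ℤ/m`; hence `φ(m)` times
the number of such `Λ` is the number of surjections. A homomorphism `ℤⁿ → ℤ/pʳ` is surjective iff
the image of some standard basis vector is a unit, i.e. is nonzero mod `p`, so there are
`p^{rn} - p^{(r-1)n}` surjections, and dividing by `φ(pʳ) = p^{r-1}(p - 1)` gives the formula.
-/

open Function LinearMap

def Submodule.IsCocyclicOfIndex {M : Type*} [AddCommGroup M] (Λ : Submodule ℤ M) (m : ℕ) :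
    Prop :=
  IsAddCyclic (M ⧸ Λ) ∧ Nat.card (M ⧸ Λ) = m

section Cocyclic

variable {M : Type*} [AddCommGroup M] {m : ℕ}

theorem Submodule.isCocyclicOfIndex_iff_exists_surjective (Λ : Submodule ℤ M) :
    Λ.IsCocyclicOfIndex m ↔ ∃ f : M →ₗ[ℤ] ZMod m, Surjective f ∧ ker f = Λ := by
  constructor
  · rintro ⟨hcyc, hcard⟩
    let e : M ⧸ Λ ≃+ ZMod m := hcard ▸ zmodAddCyclicAddEquiv hcyc |>.symm
    refine ⟨e.toAddMonoidHom.toIntLinearMap ∘ₗ Λ.mkQ, e.surjective.comp Λ.mkQ_surjective, ?_⟩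
    ext x
    simp
  · rintro ⟨f, hf, rfl⟩
    let e := f.quotKerEquivOfSurjective hf
    exact ⟨isAddCyclic_of_surjective e.symm.toAddMonoidHom e.symm.surjective,
      by rw [Nat.card_congr e.toEquiv, Nat.card_zmod]⟩

theorem surjective_of_isUnit_apply [NeZero m] {f : M →ₗ[ℤ] ZMod m} {x : M} (hx : IsUnit (f x)) :
    Surjective f := fun y =>
  ⟨(y * ↑hx.unit⁻¹).val • x, by
    rw [map_nsmul, nsmul_eq_mul, ZMod.natCast_zmod_val, mul_assoc, hx.val_inv_mul, mul_one]⟩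

theorem ker_units_smul (f : M →ₗ[ℤ] ZMod m) (u : (ZMod m)ˣ) : ker (u • f) = ker f := by
  ext x
  simp [Units.smul_def]

theorem exists_units_smul_of_ker_eq [NeZero m] {f g : M →ₗ[ℤ] ZMod m} (hf : Surjective f)
    (hg : Surjective g) (h : ker f = ker g) : ∃ u : (ZMod m)ˣ, g = u • f := by
  obtain ⟨x₀, hx₀⟩ := hf 1
  have hg_apply : ∀ x, g x = g x₀ * f x := by
    intro x
    have hx : x - (f x).val • x₀ ∈ ker g := by
      rw [← h, mem_ker, map_sub, map_nsmul, hx₀, nsmul_eq_mul, mul_one, ZMod.natCast_zmod_val,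
        sub_self]
    rw [mem_ker, map_sub, map_nsmul, sub_eq_zero, nsmul_eq_mul, ZMod.natCast_zmod_val] at hx
    rw [hx, mul_comm]
  obtain ⟨y, hy⟩ := hg 1
  obtain ⟨u, hu⟩ : IsUnit (g x₀) := .of_mul_eq_one (f y) (by rw [← hg_apply, hy])
  exact ⟨u, LinearMap.ext fun x => by
    rw [LinearMap.smul_apply, Units.smul_def, smul_eq_mul, hu, hg_apply]⟩

theorem card_isCocyclicOfIndex_mul_card_units [NeZero m] :
    Nat.card {Λ : Submodule ℤ M // Λ.IsCocyclicOfIndex m} * Nat.card (ZMod m)ˣ =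
      Nat.card {f : M →ₗ[ℤ] ZMod m // Surjective f} := by
  choose F hF_surj hF_ker using fun Λ : {Λ : Submodule ℤ M // Λ.IsCocyclicOfIndex m} =>
    Λ.1.isCocyclicOfIndex_iff_exists_surjective.1 Λ.2
  let Φ : {Λ : Submodule ℤ M // Λ.IsCocyclicOfIndex m} × (ZMod m)ˣ →
      {f : M →ₗ[ℤ] ZMod m // Surjective f} := fun Λu =>
    ⟨Λu.2 • F Λu.1, (Units.mulLeft Λu.2).bijective.surjective.comp (hF_surj Λu.1)⟩
  have hΦ : Bijective Φ := by
    constructor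
    · rintro ⟨Λ, u⟩ ⟨Λ', u'⟩ hΦ
      have huF : u • F Λ = u' • F Λ' := congrArg Subtype.val hΦ
      obtain rfl : Λ = Λ' := Subtype.ext <| by
        simpa only [ker_units_smul, hF_ker] using congrArg ker huF
      obtain ⟨x₀, hx₀⟩ := hF_surj Λ 1
      have := congrArg (· x₀) huF
      simp only [LinearMap.smul_apply, Units.smul_def, hx₀, smul_eq_mul, mul_one] at this
      exact Prod.ext rfl (Units.ext this)
    · rintro ⟨g, hg⟩
      let Λ : {Λ : Submodule ℤ M // Λ.IsCocyclicOfIndex m} :=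
        ⟨ker g, (ker g).isCocyclicOfIndex_iff_exists_surjective.2 ⟨g, hg, rfl⟩⟩
      obtain ⟨u, hu⟩ := exists_units_smul_of_ker_eq (hF_surj Λ) hg (hF_ker Λ)
      exact ⟨(Λ, u), Subtype.ext hu.symm⟩
  rw [← Nat.card_prod, Nat.card_congr (Equiv.ofBijective Φ hΦ)]

end Cocyclic

theorem Nat.card_exists_apply {α β : Type*} [Finite α] [Finite β] (P : β → Prop) :
    Nat.card {v : α → β // ∃ i, P (v i)} =
      Nat.card β ^ Nat.card α - Nat.card {b // ¬P b} ^ Nat.card α := by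
  classical
  have := Fintype.ofFinite α
  have := Fintype.ofFinite β
  simp only [Nat.card_eq_fintype_card]
  have e : {v : α → β // ¬∃ i, P (v i)} ≃ (α → {b // ¬P b}) :=
    (Equiv.subtypeEquivRight fun v => not_exists).trans
      (Equiv.subtypePiEquivPi (p := fun _ b => ¬P b))
  rw [← Fintype.card_fun, ← Fintype.card_fun, ← Fintype.card_congr e, Fintype.card_subtype_compl,
    Nat.sub_sub_self (Fintype.card_subtype_le _)]

section PrimePower

variable {p r : ℕ} [Fact p.Prime]

theorem ZMod.isUnit_iff_castHom_ne_zero (hr : r ≠ 0) (a : ZMod (p ^ r)) :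
    IsUnit a ↔ ZMod.castHom (dvd_pow_self p hr) (ZMod p) a ≠ 0 := by
  rw [← ZMod.natCast_zmod_val a,
    ZMod.isUnit_natCast_iff_not_dvd_pow Fact.out (Nat.pos_of_ne_zero hr), map_natCast, Ne,
    ZMod.natCast_eq_zero_iff]

theorem ZMod.card_nonunits_prime_pow (hr : r ≠ 0) :
    Nat.card {a : ZMod (p ^ r) // ¬IsUnit a} = p ^ (r - 1) := by
  let π := (ZMod.castHom (dvd_pow_self p hr) (ZMod p)).toAddMonoidHom
  have e : {a : ZMod (p ^ r) // ¬IsUnit a} ≃ π.ker :=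
    Equiv.subtypeEquivRight fun a => by simp [π, ZMod.isUnit_iff_castHom_ne_zero hr]
  have h := π.ker.card_mul_index
  rw [AddSubgroup.index_ker,
    AddMonoidHom.range_eq_top.2 (ZMod.castHom_surjective (dvd_pow_self p hr)), AddSubgroup.card_top,
    Nat.card_zmod, Nat.card_zmod, ← Nat.card_congr e] at h
  apply Nat.eq_of_mul_eq_mul_right (Fact.out : p.Prime).pos
  rw [h, ← pow_succ, Nat.sub_add_cancel (Nat.pos_of_ne_zero hr)]

variable {ι : Type*} [Fintype ι] [DecidableEq ι]

theorem surjective_iff_exists_isUnit_single (hr : r ≠ 0) (f : (ι → ℤ) →ₗ[ℤ] ZMod (p ^ r)) :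
    Surjective f ↔ ∃ i, IsUnit (f (Pi.single i 1)) := by
  refine ⟨fun hf => ?_, fun ⟨i, hi⟩ => surjective_of_isUnit_apply hi⟩
  by_contra! hnon
  let π := ZMod.castHom (dvd_pow_self p hr) (ZMod p)
  have hπf : π.toAddMonoidHom.toIntLinearMap ∘ₗ f = 0 :=
    (Pi.basisFun ℤ ι).ext fun i => by
      simpa [π, ZMod.isUnit_iff_castHom_ne_zero hr] using hnon i
  obtain ⟨x, hx⟩ := hf 1
  simpa [π, hx, ZMod.cast_one (dvd_pow_self p hr)] using congr($hπf x)

theorem card_surjective_linearMap_zmod_prime_pow (hr : r ≠ 0) :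
    Nat.card {f : (ι → ℤ) →ₗ[ℤ] ZMod (p ^ r) // Surjective f} =
      (p ^ r) ^ Fintype.card ι - (p ^ (r - 1)) ^ Fintype.card ι := by
  let e := Equiv.subtypeEquiv (q := fun v => ∃ i, IsUnit (v i))
    (LinearEquiv.piRing ℤ (ZMod (p ^ r)) ι ℤ).toEquiv (surjective_iff_exists_isUnit_single hr)
  rw [Nat.card_congr e, Nat.card_exists_apply, Nat.card_zmod, Nat.card_eq_fintype_card (α := ι),
    ZMod.card_nonunits_prime_pow hr]

end PrimePower

theorem pow_mul_geom_sum_mul_eq_pow_sub_pow (p n s : ℕ) (hp : 1 ≤ p) :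
    p ^ ((n - 1) * s) * (∑ i ∈ Finset.range n, p ^ i) * (p ^ s * (p - 1)) =
      (p ^ (s + 1)) ^ n - (p ^ s) ^ n := by
  rcases n with _ | k
  · simp
  have hle : (p ^ s) ^ (k + 1) ≤ (p ^ (s + 1)) ^ (k + 1) :=
    Nat.pow_le_pow_left (Nat.pow_le_pow_right hp s.le_succ) _
  zify [hp, hle]
  rw [Nat.add_sub_cancel]
  linear_combination ((p : ℤ) ^ (k * s) * (p : ℤ) ^ s) * geom_sum_mul (p : ℤ) (k + 1)

theorem stmt15_general (n : ℕ) (p : ℕ) (hp : p.Prime) (r : ℕ) (hr : 1 ≤ r) :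
    Nat.card {Λ : Submodule ℤ (Fin n → ℤ) //
        IsAddCyclic ((Fin n → ℤ) ⧸ Λ) ∧ Nat.card ((Fin n → ℤ) ⧸ Λ) = p ^ r} =
      p ^ ((n - 1) * (r - 1)) * ((p ^ n - 1) / (p - 1)) ∧
    Nat.card {Λ : Submodule ℤ (Fin n → ℤ) //
        IsAddCyclic ((Fin n → ℤ) ⧸ Λ) ∧ Nat.card ((Fin n → ℤ) ⧸ Λ) = p ^ r} =
      p ^ ((n - 1) * (r - 1)) * ∑ i ∈ Finset.range n, p ^ i := by
  have : Fact p.Prime := ⟨hp⟩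
  obtain ⟨s, rfl⟩ := Nat.exists_eq_add_of_le' hr
  have hunits : Nat.card (ZMod (p ^ (s + 1)))ˣ = p ^ s * (p - 1) := by
    rw [Nat.card_eq_fintype_card, ZMod.card_units_eq_totient, Nat.totient_prime_pow_succ hp]
  have hcount := card_isCocyclicOfIndex_mul_card_units (M := Fin n → ℤ) (m := p ^ (s + 1))
  rw [hunits, card_surjective_linearMap_zmod_prime_pow s.add_one_ne_zero, Fintype.card_fin,
    Nat.add_sub_cancel, ← pow_mul_geom_sum_mul_eq_pow_sub_pow p n s hp.one_le] at hcount
  have hcard := Nat.eq_of_mul_eq_mul_right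
    (Nat.mul_pos (pow_pos hp.pos s) (Nat.sub_pos_of_lt hp.one_lt)) hcount
  rw [Nat.add_sub_cancel, ← Nat.geomSum_eq hp.two_le]
  exact ⟨hcard, hcard⟩

/-- Let n ≥ 1, p prime, r ≥ 1. The number of sublattices Λ of ℤ^n with ℤ^n/Λ
cyclic of order p^r equals p^{(n−1)(r−1)}·(p^n − 1)/(p − 1) = p^{(n−1)(r−1)}·(1 + p + ⋯ + p^{n−1}). -/
theorem stmt15 (n : ℕ) (hn : 1 ≤ n) (p : ℕ) (hp : p.Prime) (r : ℕ) (hr : 1 ≤ r) :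
    Nat.card {Λ : Submodule ℤ (Fin n → ℤ) //
        IsAddCyclic ((Fin n → ℤ) ⧸ Λ) ∧ Nat.card ((Fin n → ℤ) ⧸ Λ) = p ^ r} =
      p ^ ((n - 1) * (r - 1)) * ((p ^ n - 1) / (p - 1)) ∧
    Nat.card {Λ : Submodule ℤ (Fin n → ℤ) //
        IsAddCyclic ((Fin n → ℤ) ⧸ Λ) ∧ Nat.card ((Fin n → ℤ) ⧸ Λ) = p ^ r} =
      p ^ ((n - 1) * (r - 1)) * ∑ i ∈ Finset.range n, p ^ i :=
  stmt15_general n p hp r hr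
end

section
/- Fix integers n ≥ 2 and r ≥ 1. For a prime p, let c(p) be the number of sublattices Λ of ℤ^n with ℤ^n/Λ cyclic of order p^r, and let a(p) be the total number of sublattices of ℤ^n of index p^r. Then the ratio c(p)/a(p) (as a real number) tends to 1 as p tends to infinity along the primes; that is, for every ε > 0 there exists N such that |c(p)/a(p) − 1| < ε for every prime p > N. -/
/-!
A surjection `f : ℤ^(m+1) → ℤ/p^r` with `f e₀ = 1` is determined by its kernel, and there are
`p^(rm)` of them, so `c(p) ≥ p^(rm)`. Conversely, a sublattice `Λ ⊆ ℤ × ℤ^m` is determined by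
`Λ' = Λ ∩ ℤ^m`, the generator `d` of its projection to `ℤ`, and the class modulo `Λ'` of the
`ℤ^m`-component of some `x ∈ Λ` over `d`. Writing `a(m, k)` for the number of sublattices of
`ℤ^m` of index `k`, this gives `a(m+1, p^r) ≤ ∑_{i ≤ r} p^i a(m, p^i)`, and induction on `m`
gives `a(p) ≤ p^(rm) (1 + O(1/p))`. Since `c ≤ a`, `|c/a - 1| = O(1/p)`.
-/

/-- c(p): the number of sublattices Λ of ℤ^n with ℤ^n/Λ cyclic of order p^r. -/
noncomputable def cocyclicCount (n r p : ℕ) : ℕ :=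
  Nat.card {Λ : Submodule ℤ (Fin n → ℤ) //
    IsAddCyclic ((Fin n → ℤ) ⧸ Λ) ∧ Nat.card ((Fin n → ℤ) ⧸ Λ) = p ^ r}

/-- a(p): the total number of sublattices of ℤ^n of index p^r. -/
noncomputable def sublatticeCount (n r p : ℕ) : ℕ :=
  Nat.card {Λ : Submodule ℤ (Fin n → ℤ) // Nat.card ((Fin n → ℤ) ⧸ Λ) = p ^ r}

open Submodule LinearMap

noncomputable def latticeCount (M : Type*) [AddCommGroup M] (m : ℕ) : ℕ :=
  Nat.card {Λ : Submodule ℤ M // Nat.card (M ⧸ Λ) = m}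

lemma latticeCount_congr {M M' : Type*} [AddCommGroup M] [AddCommGroup M'] (e : M ≃ₗ[ℤ] M')
    (m : ℕ) : latticeCount M m = latticeCount M' m :=
  Nat.card_congr <| (orderIsoMapComap e).toEquiv.subtypeEquiv fun Λ => by
    rw [Nat.card_congr (Quotient.equiv Λ (Λ.map (e : M →ₗ[ℤ] M')) e rfl).toEquiv]; rfl

lemma Int.ideal_eq_span_card (I : Ideal ℤ) : I = Ideal.span {(Nat.card (ℤ ⧸ I) : ℤ)} := by
  obtain ⟨g, rfl⟩ : ∃ g : ℤ, I = Ideal.span {g} :=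
    ⟨IsPrincipal.generator I, (Ideal.span_singleton_generator I).symm⟩
  rw [Nat.card_congr (Int.quotientSpanEquivZMod g).toEquiv, Nat.card_zmod, Int.span_natAbs]

lemma latticeCount_int_le_one (m : ℕ) : latticeCount ℤ m ≤ 1 := by
  have : Subsingleton {I : Submodule ℤ ℤ // Nat.card (ℤ ⧸ I) = m} :=
    ⟨fun ⟨I, hI⟩ ⟨J, hJ⟩ => by
      rw [Subtype.mk.injEq, Int.ideal_eq_span_card I, Int.ideal_eq_span_card J, hI, hJ]⟩
  exact Finite.card_le_one_iff_subsingleton.mpr this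

lemma nsmul_mem_of_card_quotient_eq {M : Type*} [AddCommGroup M] {Λ : Submodule ℤ M} {m : ℕ}
    (h : Nat.card (M ⧸ Λ) = m) (x : M) : m • x ∈ Λ := by
  rw [← Quotient.mk_eq_zero, Quotient.mk_smul, ← h]
  exact card_nsmul_eq_zero'

lemma finite_sublattices_of_card_eq (n : ℕ) {m : ℕ} (hm : m ≠ 0) :
    Finite {Λ : Submodule ℤ (Fin n → ℤ) // Nat.card ((Fin n → ℤ) ⧸ Λ) = m} := by
  have : NeZero m := ⟨hm⟩
  let red : (Fin n → ℤ) →ₗ[ℤ] (Fin n → ZMod m) :=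
    (Int.castAddHom (ZMod m)).toIntLinearMap.compLeft (Fin n)
  have ker_red_le {Λ : Submodule ℤ (Fin n → ℤ)} (h : Nat.card ((Fin n → ℤ) ⧸ Λ) = m) :
      ker red ≤ Λ := by
    intro x hx
    have hdvd (i : Fin n) : (m : ℤ) ∣ x i := by
      simpa [red, ZMod.intCast_zmod_eq_zero_iff_dvd] using congrFun hx i
    choose y hy using hdvd
    have : x = m • y := funext fun i => by simp [hy i]
    exact this ▸ nsmul_mem_of_card_quotient_eq h y
  refine Finite.of_injective (fun Λ => Λ.1.map red) fun Λ₁ Λ₂ h => Subtype.ext ?_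
  rw [← sup_eq_left.mpr (ker_red_le Λ₁.2), ← sup_eq_left.mpr (ker_red_le Λ₂.2),
    ← comap_map_eq, ← comap_map_eq]
  exact congrArg _ h

lemma card_quotient_map_fst_mul_card_quotient_comap_inr {R M₁ M₂ : Type*} [Ring R]
    [AddCommGroup M₁] [AddCommGroup M₂] [Module R M₁] [Module R M₂]
    (Λ : Submodule R (M₁ × M₂)) :
    Nat.card (M₁ ⧸ Λ.map (fst R M₁ M₂)) * Nat.card (M₂ ⧸ Λ.comap (inr R M₁ M₂)) =
      Nat.card ((M₁ × M₂) ⧸ Λ) := by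
  set K := ker (fst R M₁ M₂)
  have ker_fst_comp : ker ((Λ.map (fst R M₁ M₂)).mkQ ∘ₗ fst R M₁ M₂) = Λ ⊔ K := by
    rw [ker_comp, ker_mkQ, comap_map_eq]
  have top_equiv : ((M₁ × M₂) ⧸ (Λ ⊔ K)) ≃ₗ[R] M₁ ⧸ Λ.map (fst R M₁ M₂) :=
    (quotEquivOfEq _ _ ker_fst_comp.symm).trans <| quotKerEquivOfSurjective _ <|
      (mkQ_surjective _).comp fst_surjective
  have range_inr_comp : range (Λ.mkQ ∘ₗ inr R M₁ M₂) = (Λ ⊔ K).map Λ.mkQ := by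
    rw [range_comp, range_inr, Submodule.map_sup, mkQ_map_self, bot_sup_eq]
  have sub_equiv : (M₂ ⧸ Λ.comap (inr R M₁ M₂)) ≃ₗ[R] (Λ ⊔ K).map Λ.mkQ :=
    (quotEquivOfEq _ _ (by rw [ker_comp, ker_mkQ])).trans <|
      (quotKerEquivRange _).trans (LinearEquiv.ofEq _ _ range_inr_comp)
  rw [← Nat.card_congr top_equiv.toEquiv, Nat.card_congr sub_equiv.toEquiv, mul_comm]
  exact card_quotient_mul_card_quotient _ _ le_sup_left

lemma le_of_comap_inr_le {R N : Type*} [CommRing R] [AddCommGroup N] [Module R N]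
    {Λ₁ Λ₂ : Submodule R (R × N)} {x₁ x₂ : R × N} (hx₁ : x₁ ∈ Λ₁) (hx₂ : x₂ ∈ Λ₂)
    (hfst : x₁.1 = x₂.1) (hspan : Λ₁.map (fst R R N) = Ideal.span {x₁.1})
    (hcomap : Λ₁.comap (inr R R N) ≤ Λ₂.comap (inr R R N))
    (hsnd : x₁.2 - x₂.2 ∈ Λ₂.comap (inr R R N)) : Λ₁ ≤ Λ₂ := by
  have hx₁₂ : x₁ ∈ Λ₂ := by
    have : x₁ = inr R R N (x₁.2 - x₂.2) + x₂ := Prod.ext (by simp [hfst]) (by simp)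
    exact this ▸ Λ₂.add_mem hsnd hx₂
  intro y hy
  obtain ⟨t, ht⟩ := Ideal.mem_span_singleton'.mp (hspan ▸ mem_map_of_mem hy)
  replace ht : t * x₁.1 = y.1 := ht
  have hz : inr R R N (y - t • x₁).2 = y - t • x₁ := Prod.ext (by simp [ht]) rfl
  have hz₂ : y - t • x₁ ∈ Λ₂ :=
    hz ▸ hcomap (show _ ∈ Λ₁ from hz ▸ Λ₁.sub_mem hy (Λ₁.smul_mem t hx₁))
  simpa using Λ₂.add_mem hz₂ (Λ₂.smul_mem t hx₁₂)

lemma Nat.card_sigma_of_card_eq {ι : Type*} {β : ι → Type*} [Finite ι] [∀ i, Finite (β i)]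
    {k : ℕ} (h : ∀ i, Nat.card (β i) = k) : Nat.card (Σ i, β i) = Nat.card ι * k := by
  have := Fintype.ofFinite ι
  simp [Nat.card_sigma, h, Nat.card_eq_fintype_card, mul_comm]

lemma Submodule.sub_mem_of_sigma_mk_eq {R M : Type*} [Ring R] [AddCommGroup M] [Module R M]
    {P Q : Submodule R M} {x y : M}
    (h : (⟨P, Submodule.Quotient.mk x⟩ : Σ L : Submodule R M, M ⧸ L) =
      ⟨Q, Submodule.Quotient.mk y⟩) :
    P = Q ∧ x - y ∈ P := by
  obtain ⟨rfl, hxy⟩ := Sigma.mk.inj_iff.mp h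
  exact ⟨rfl, (Submodule.Quotient.eq P).mp (eq_of_heq hxy)⟩

lemma latticeCount_prod_le (n : ℕ) {m : ℕ} (hm : m ≠ 0) :
    latticeCount (ℤ × (Fin n → ℤ)) m ≤ ∑ k ∈ m.divisors, k * latticeCount (Fin n → ℤ) k := by
  set N := Fin n → ℤ
  have hfin (k : m.divisors) : Finite {L : Submodule ℤ N // Nat.card (N ⧸ L) = k} :=
    finite_sublattices_of_card_eq n (Nat.pos_of_mem_divisors k.2).ne'
  have hfinq (k : m.divisors) (L : {L : Submodule ℤ N // Nat.card (N ⧸ L) = k}) :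
      Finite (N ⧸ L.1) :=
    Nat.finite_of_card_ne_zero (by rw [L.2]; exact (Nat.pos_of_mem_divisors k.2).ne')
  let T := Σ k : m.divisors, Σ L : {L : Submodule ℤ N // Nat.card (N ⧸ L) = k}, N ⧸ L.1
  have card_T : Nat.card T = ∑ k ∈ m.divisors, k * latticeCount N k := by
    rw [Nat.card_sigma, ← Finset.sum_coe_sort m.divisors]
    exact Finset.sum_congr rfl fun k _ => by
      rw [Nat.card_sigma_of_card_eq (fun L => L.2), mul_comm]; rfl
  have exists_lift (Λ : Submodule ℤ (ℤ × N)) :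
      ∃ x ∈ Λ, x.1 = Nat.card (ℤ ⧸ Λ.map (fst ℤ ℤ N)) := by
    set d := Nat.card (ℤ ⧸ Λ.map (fst ℤ ℤ N))
    have hd : (d : ℤ) ∈ Λ.map (fst ℤ ℤ N) := by
      rw [Int.ideal_eq_span_card (Λ.map _)]; exact Ideal.mem_span_singleton_self _
    simpa using hd
  choose lift lift_mem lift_fst using exists_lift
  have card_mul (Λ : {Λ : Submodule ℤ (ℤ × N) // Nat.card ((ℤ × N) ⧸ Λ) = m}) :
      Nat.card (ℤ ⧸ Λ.1.map (fst ℤ ℤ N)) * Nat.card (N ⧸ Λ.1.comap (inr ℤ ℤ N)) = m :=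
    (card_quotient_map_fst_mul_card_quotient_comap_inr Λ.1).trans Λ.2
  let F (Λ : {Λ : Submodule ℤ (ℤ × N) // Nat.card ((ℤ × N) ⧸ Λ) = m}) : T :=
    ⟨⟨_, Nat.mem_divisors.mpr ⟨Dvd.intro_left _ (card_mul Λ), hm⟩⟩, ⟨_, rfl⟩,
      Submodule.Quotient.mk (lift Λ.1).2⟩
  have hF : Function.Injective F := by
    rintro Λ₁ Λ₂ h
    obtain ⟨hL, hsnd⟩ := sub_mem_of_sigma_mk_eq
      (congrArg (fun t : T => (⟨t.2.1.1, t.2.2⟩ : Σ L : Submodule ℤ N, N ⧸ L)) h)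
    change Λ₁.1.comap (inr ℤ ℤ N) = Λ₂.1.comap (inr ℤ ℤ N) at hL
    change (lift Λ₁.1).2 - (lift Λ₂.1).2 ∈ Λ₁.1.comap (inr ℤ ℤ N) at hsnd
    have hk : Nat.card (N ⧸ Λ₁.1.comap (inr ℤ ℤ N)) ≠ 0 :=
      right_ne_zero_of_mul (card_mul Λ₁ ▸ hm)
    have hd : Nat.card (ℤ ⧸ Λ₁.1.map (fst ℤ ℤ N)) = Nat.card (ℤ ⧸ Λ₂.1.map (fst ℤ ℤ N)) :=
      Nat.eq_of_mul_eq_mul_right (Nat.pos_of_ne_zero hk)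
        ((card_mul Λ₁).trans (hL ▸ card_mul Λ₂).symm)
    have hfst : (lift Λ₁.1).1 = (lift Λ₂.1).1 := by rw [lift_fst, lift_fst, hd]
    have hspan (Λ : Submodule ℤ (ℤ × N)) : Λ.map (fst ℤ ℤ N) = Ideal.span {(lift Λ).1} := by
      rw [lift_fst]; exact Int.ideal_eq_span_card _
    refine Subtype.ext (le_antisymm ?_ ?_)
    · exact le_of_comap_inr_le (lift_mem _) (lift_mem _) hfst (hspan _) hL.le (hL ▸ hsnd)
    · refine le_of_comap_inr_le (lift_mem _) (lift_mem _) hfst.symm (hspan _) hL.ge ?_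
      simpa using Submodule.neg_mem _ hsnd
  exact card_T ▸ Nat.card_le_card_of_injective F hF

open Finset

lemma sublatticeCount_succ_le (n r : ℕ) {p : ℕ} (hp : p.Prime) :
    sublatticeCount (n + 1) r p ≤ ∑ i ∈ range (r + 1), p ^ i * sublatticeCount n i p :=
  calc sublatticeCount (n + 1) r p = latticeCount (ℤ × (Fin n → ℤ)) (p ^ r) :=
        (latticeCount_congr (Fin.consLinearEquiv ℤ fun _ => ℤ) _).symm
    _ ≤ ∑ k ∈ (p ^ r).divisors, k * latticeCount (Fin n → ℤ) k :=
        latticeCount_prod_le n (pow_ne_zero _ hp.ne_zero)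
    _ = _ := Nat.sum_divisors_prime_pow hp

lemma sublatticeCount_one_le (r p : ℕ) : sublatticeCount 1 r p ≤ 1 :=
  (latticeCount_congr (LinearEquiv.funUnique (Fin 1) ℤ ℤ) (p ^ r)).trans_le
    (latticeCount_int_le_one _)

theorem prime_mul_sublatticeCount_le (n k : ℕ) {p : ℕ} (hp : p.Prime) :
    p * sublatticeCount (n + 1) k p ≤ p ^ (k * n + 1) + n * (k + 1) ^ n * p ^ (k * n) := by
  induction n generalizing k with
  | zero => simpa using Nat.mul_le_mul_left p (sublatticeCount_one_le k p)
  | succ n ih =>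
    set C := n * (k + 1) ^ n
    have hp1 := hp.one_le
    have term (i : ℕ) (hi : i < k) :
        p ^ i * (p * sublatticeCount (n + 1) i p) ≤ (1 + C) * p ^ (k * (n + 1)) := by
      have hC : n * (i + 1) ^ n ≤ C :=
        Nat.mul_le_mul_left n (Nat.pow_le_pow_left (by omega) n)
      calc p ^ i * (p * sublatticeCount (n + 1) i p)
          ≤ p ^ i * (p ^ (i * n + 1) + n * (i + 1) ^ n * p ^ (i * n)) := by gcongr; exact ih i
        _ ≤ p ^ i * ((1 + C) * p ^ (i * n + 1)) := by
          rw [add_mul, one_mul]; gcongr; omega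
        _ = (1 + C) * p ^ (i * (n + 1) + 1) := by ring
        _ ≤ (1 + C) * p ^ (k * (n + 1)) :=
          Nat.mul_le_mul_left _ (Nat.pow_le_pow_right hp1 (by nlinarith))
    have hC : k * (1 + C) + C ≤ (n + 1) * (k + 1) ^ (n + 1) := by
      have : k ≤ (k + 1) ^ (n + 1) := (Nat.le_succ k).trans (Nat.le_self_pow (by omega) _)
      simp only [C, pow_succ] at this ⊢; nlinarith
    calc p * sublatticeCount (n + 1 + 1) k p
        ≤ p * ∑ i ∈ range (k + 1), p ^ i * sublatticeCount (n + 1) i p := by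
          gcongr; exact sublatticeCount_succ_le _ _ hp
      _ = ∑ i ∈ range k, p ^ i * (p * sublatticeCount (n + 1) i p)
            + p ^ k * (p * sublatticeCount (n + 1) k p) := by
          rw [sum_range_succ, mul_add, mul_sum]; ring_nf
      _ ≤ ∑ i ∈ range k, (1 + C) * p ^ (k * (n + 1))
            + p ^ k * (p ^ (k * n + 1) + C * p ^ (k * n)) :=
          add_le_add (sum_le_sum fun i hi => term i (mem_range.mp hi))
            (Nat.mul_le_mul_left _ (ih k))
      _ = (k * (1 + C) + C) * p ^ (k * (n + 1)) + p ^ (k * (n + 1) + 1) := by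
          rw [sum_const, card_range, smul_eq_mul]; ring
      _ ≤ p ^ (k * (n + 1) + 1) + (n + 1) * (k + 1) ^ (n + 1) * p ^ (k * (n + 1)) := by
          rw [add_comm]; gcongr

lemma LinearMap.eq_of_ker_le_of_apply_eq_one {M : Type*} [AddCommGroup M] {q : ℕ}
    {f g : M →ₗ[ℤ] ZMod q} {e : M} (hf : f e = 1) (hg : g e = 1) (h : ker f ≤ ker g) :
    f = g := by
  ext x
  obtain ⟨c, hc⟩ := ZMod.intCast_surjective (f x)
  have hx : x - c • e ∈ ker g := h (by simp [hf, hc])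
  exact (sub_eq_zero.mp (by simpa [hg, hc] using hx)).symm

lemma LinearMap.surjective_of_apply_eq_one {M : Type*} [AddCommGroup M] {q : ℕ}
    {f : M →ₗ[ℤ] ZMod q} {e : M} (hf : f e = 1) : Function.Surjective f := fun t => by
  obtain ⟨c, rfl⟩ := ZMod.intCast_surjective t
  exact ⟨c • e, by simp [hf]⟩

lemma isAddCyclic_and_card_quotient_ker_of_apply_eq_one {M : Type*} [AddCommGroup M] {q : ℕ}
    {f : M →ₗ[ℤ] ZMod q} {e : M} (hf : f e = 1) :
    IsAddCyclic (M ⧸ ker f) ∧ Nat.card (M ⧸ ker f) = q := by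
  let φ := f.quotKerEquivOfSurjective (surjective_of_apply_eq_one hf)
  exact ⟨isAddCyclic_of_surjective φ.symm.toLinearMap φ.symm.surjective,
    (Nat.card_congr φ.toEquiv).trans (Nat.card_zmod q)⟩

lemma finite_cocyclic_sublattices (n r : ℕ) {p : ℕ} (hp : p ≠ 0) :
    Finite {Λ : Submodule ℤ (Fin n → ℤ) //
      IsAddCyclic ((Fin n → ℤ) ⧸ Λ) ∧ Nat.card ((Fin n → ℤ) ⧸ Λ) = p ^ r} :=
  have := finite_sublattices_of_card_eq n (pow_ne_zero r hp)
  Finite.of_injective _ (Subtype.impEmbedding _ _ fun _ h => h.2).injective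

lemma cocyclicCount_le_sublatticeCount (n r : ℕ) {p : ℕ} (hp : p ≠ 0) :
    cocyclicCount n r p ≤ sublatticeCount n r p :=
  have := finite_sublattices_of_card_eq n (pow_ne_zero r hp)
  Nat.card_le_card_of_injective _ (Subtype.impEmbedding _ _ fun _ h => h.2).injective

theorem pow_le_cocyclicCount (m r : ℕ) {p : ℕ} (hp : p ≠ 0) :
    p ^ (r * m) ≤ cocyclicCount (m + 1) r p := by
  set q := p ^ r
  let f (v : Fin m → ZMod q) : (Fin (m + 1) → ℤ) →ₗ[ℤ] ZMod q :=
    (Pi.basisFun ℤ (Fin (m + 1))).constr ℤ (Fin.cons 1 v)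
  have f_single (v : Fin m → ZMod q) (i : Fin (m + 1)) :
      f v (Pi.single i 1) = (Fin.cons 1 v : Fin (m + 1) → ZMod q) i := by
    simpa [f] using (Pi.basisFun ℤ (Fin (m + 1))).constr_basis ℤ (Fin.cons 1 v) i
  have f_zero (v : Fin m → ZMod q) : f v (Pi.single 0 1) = 1 := f_single v 0
  have hF_inj : Function.Injective fun v =>
      (⟨ker (f v), isAddCyclic_and_card_quotient_ker_of_apply_eq_one (f_zero v)⟩ :
        {Λ : Submodule ℤ (Fin (m + 1) → ℤ) //
          IsAddCyclic ((Fin (m + 1) → ℤ) ⧸ Λ) ∧ Nat.card ((Fin (m + 1) → ℤ) ⧸ Λ) = q}) := by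
    intro v w h
    have hvw := eq_of_ker_le_of_apply_eq_one (f_zero v) (f_zero w)
      (congrArg Subtype.val h).le
    funext i
    simpa [f_single] using congrArg (· (Pi.single i.succ 1)) hvw
  have := finite_cocyclic_sublattices (m + 1) r hp
  calc p ^ (r * m) = Nat.card (Fin m → ZMod q) := by
        rw [Nat.card_fun, Nat.card_zmod, Nat.card_fin, pow_mul]
    _ ≤ cocyclicCount (m + 1) r p := Nat.card_le_card_of_injective _ hF_inj

lemma abs_div_sub_one_le {a c x p D : ℝ} (hp : 0 < p) (hx : 0 < x) (hxc : x ≤ c) (hca : c ≤ a)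
    (ha : p * a ≤ p * x + D * x) : |c / a - 1| ≤ D / p := by
  have ha0 : 0 < a := hx.trans_le (hxc.trans hca)
  rw [abs_sub_comm, abs_of_nonneg (sub_nonneg.2 ((div_le_one ha0).2 hca)), one_sub_div ha0.ne',
    div_le_div_iff₀ ha0 hp]
  have hD : 0 ≤ D := nonneg_of_mul_nonneg_left
    (by nlinarith [mul_nonneg hp.le (sub_nonneg.2 (hxc.trans hca))]) hx
  nlinarith [mul_nonneg hp.le (sub_nonneg.2 hxc), mul_nonneg hD (sub_nonneg.2 (hxc.trans hca))]

theorem stmt19_general (n r : ℕ) (hn : 2 ≤ n) :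
    ∀ ε : ℝ, 0 < ε → ∃ N : ℕ, ∀ p : ℕ, p.Prime → N < p →
      |((cocyclicCount n r p : ℝ) / (sublatticeCount n r p : ℝ)) - 1| < ε := by
  intro ε hε
  obtain ⟨m, rfl⟩ : ∃ m, n = m + 1 := ⟨n - 1, by omega⟩
  set D := m * (r + 1) ^ m
  refine ⟨⌈(D : ℝ) / ε⌉₊, fun p hp hpN => ?_⟩
  have hp0 : (0 : ℝ) < p := by exact_mod_cast hp.pos
  have lower : ((p ^ (r * m) : ℕ) : ℝ) ≤ cocyclicCount (m + 1) r p := by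
    exact_mod_cast pow_le_cocyclicCount m r hp.ne_zero
  have middle : (cocyclicCount (m + 1) r p : ℝ) ≤ sublatticeCount (m + 1) r p := by
    exact_mod_cast cocyclicCount_le_sublatticeCount (m + 1) r hp.ne_zero
  have upper : (p : ℝ) * sublatticeCount (m + 1) r p ≤ p * ((p ^ (r * m) : ℕ) : ℝ)
      + D * ((p ^ (r * m) : ℕ) : ℝ) := by
    exact_mod_cast pow_succ' p (r * m) ▸ prime_mul_sublatticeCount_le m r hp
  calc _ ≤ (D : ℝ) / p :=
        abs_div_sub_one_le hp0 (by exact_mod_cast pow_pos hp.pos _) lower middle upper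
    _ < ε := (div_lt_iff₀ hp0).2 (by
      have := Nat.lt_of_ceil_lt hpN
      rwa [div_lt_iff₀ hε, mul_comm] at this)

/-- Fix n ≥ 2 and r ≥ 1. The ratio c(p)/a(p) tends to 1 as p → ∞ along the
primes: for every ε > 0 there is N such that |c(p)/a(p) − 1| < ε for every prime p > N. -/
theorem stmt19 (n r : ℕ) (hn : 2 ≤ n) (hr : 1 ≤ r) :
    ∀ ε : ℝ, 0 < ε → ∃ N : ℕ, ∀ p : ℕ, p.Prime → N < p →
      |((cocyclicCount n r p : ℝ) / (sublatticeCount n r p : ℝ)) - 1| < ε :=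
  stmt19_general n r hn
end
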